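/- arXiv:1106.2399 — 4 statements merged into one kernel-verified Lean document; each statement's English description precedes it below -/
import Mathlib

section
/- The normalized median Genocchi number h_{n+1} equals the sum over all tuples (f_1,...,f_n) of non-negative integers (with the convention f_0 = f_{n+1} = 0) of the product \prod_{k=1}^{n} \binom{1+f_{k-1}}{f_k} \cdot \prod_{k=1}^{n} \binom{1+f_{k+1}}{f_k}. -/
/-- The normalized median Genocchi number `h m`: the number of collections
`(S_1, …, S_{m-1})` of subsets of `{1, …, m}` such that `#S_i = i` for
`1 ≤ i ≤ m-1` and `S_i ⊆ S_{i+1} ∪ {i+1}` for `1 ≤ i ≤ m-2`.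
(Here `S : Fin (m-1) → Finset (Fin m)` with `S ⟨i-1,_⟩` playing the role of `S_i`,
and the element `i+1` of `{1,…,m}` corresponds to `(⟨i, _⟩ : Fin m)`.) -/
noncomputable def genocchi (m : ℕ) : ℕ :=
  Nat.card {S : Fin (m - 1) → Finset (Fin m) //
    (∀ i : Fin (m - 1), (S i).card = (i : ℕ) + 1) ∧
    (∀ i : Fin (m - 1), ∀ h : (i : ℕ) + 1 < m - 1,
      S i ⊆ S ⟨(i : ℕ) + 1, h⟩ ∪ {⟨(i : ℕ) + 1, by omega⟩})}

/-- Extension of a tuple `(f_1, …, f_n)` by the convention `f_0 = f_{n+1} = 0`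
(and `f_k = 0` for all `k` outside `{1,…,n}`). -/
def extTuple (n : ℕ) (f : Fin n → ℕ) (k : ℕ) : ℕ :=
  if h : 1 ≤ k ∧ k ≤ n then f ⟨k - 1, by omega⟩ else 0


section
open Finset


namespace GenAux

lemma nat_card_sigma {ι : Type*} [Fintype ι] (B : ι → Type*) [∀ i, Finite (B i)] :
    Nat.card (Σ i, B i) = ∑ i, Nat.card (B i) := by
  classical
  letI : ∀ i, Fintype (B i) := fun i => Fintype.ofFinite _
  simp [Nat.card_eq_fintype_card]

lemma nat_card_subtype {γ : Type*} [Fintype γ] (p : γ → Prop) [DecidablePred p] :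
    Nat.card {x : γ // p x} = (Finset.univ.filter p).card := by
  rw [Nat.card_eq_fintype_card, Fintype.card_subtype]

lemma card_subsets {β : Type*} [DecidableEq β] (U : Finset β) (r : ℕ) :
    Nat.card {b : Finset β // b ⊆ U ∧ b.card = r} = (U.card).choose r := by
  classical
  rw [← Finset.card_powersetCard, ← Nat.card_eq_finsetCard]
  exact Nat.card_congr (Equiv.subtypeEquivRight (by simp [Finset.mem_powersetCard]))

lemma card_supersets {β : Type*} [DecidableEq β] (U a : Finset β) (ha : a ⊆ U) (r : ℕ)
    (har : a.card ≤ r) :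
    Nat.card {b : Finset β // b ⊆ U ∧ b.card = r ∧ a ⊆ b} =
      (U.card - a.card).choose (r - a.card) := by
  classical
  have key : {b : Finset β // b ⊆ U ∧ b.card = r ∧ a ⊆ b} ≃
      {d : Finset β // d ⊆ U \ a ∧ d.card = r - a.card} := by
    refine ⟨fun b => ⟨b.1 \ a, ?_, ?_⟩, fun d => ⟨d.1 ∪ a, ?_, ?_, ?_⟩, ?_, ?_⟩
    · exact Finset.sdiff_subset_sdiff b.2.1 (le_refl _)
    · rw [Finset.card_sdiff_of_subset b.2.2.2, b.2.2.1]
    · exact Finset.union_subset (d.2.1.trans (Finset.sdiff_subset)) ha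
    · have hd : Disjoint d.1 a := Finset.disjoint_of_subset_left d.2.1 (Finset.sdiff_disjoint)
      rw [Finset.card_union_of_disjoint hd, d.2.2]
      omega
    · exact Finset.subset_union_right
    · rintro ⟨b, hbU, hbc, hab⟩
      exact Subtype.ext (Finset.sdiff_union_of_subset hab)
    · rintro ⟨d, hdU, hdc⟩
      have hd : Disjoint d a := Finset.disjoint_of_subset_left hdU (Finset.sdiff_disjoint)
      exact Subtype.ext (by simp [Finset.union_sdiff_distrib, Finset.sdiff_eq_self_of_disjoint hd])
  rw [Nat.card_congr key, card_subsets, Finset.card_sdiff_of_subset ha]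

end GenAux

namespace GenAux

section Chains

variable {γ : Type*} [Fintype γ] (P : ℕ → γ → Prop) (R : ℕ → γ → γ → Prop)

/-- Pinned chains of length `m+1`, levels `k₀, …, k₀+m`, starting at `s`. -/
def PChain (m k₀ : ℕ) (s : γ) : Type _ :=
  {g : Fin (m+1) → γ // g ⟨0, Nat.succ_pos m⟩ = s ∧ (∀ i : Fin (m+1), P (k₀ + i) (g i)) ∧
    ∀ (i : ℕ) (h : i + 1 < m + 1), R (k₀ + i) (g ⟨i, by omega⟩) (g ⟨i+1, h⟩)}

instance (m k₀ : ℕ) (s : γ) : Finite (PChain P R m k₀ s) := by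
  unfold PChain; infer_instance

lemma pchain_empty (m k₀ : ℕ) (s : γ) (hs : ¬ P k₀ s) : IsEmpty (PChain P R m k₀ s) := by
  constructor
  rintro ⟨g, h0, h1, _⟩
  have h := h1 ⟨0, Nat.succ_pos m⟩
  rw [h0] at h
  exact hs (by simpa using h)

/-- prepend -/
def prep {m : ℕ} (s : γ) (g : Fin (m+1) → γ) : Fin (m+2) → γ := fun i =>
  match i with
  | ⟨0, _⟩ => s
  | ⟨j+1, hj⟩ => g ⟨j, by omega⟩

def pchain_succ_equiv (m k₀ : ℕ) (s : γ) (hs : P k₀ s) :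
    PChain P R (m+1) k₀ s ≃ Σ t : γ, {_g : PChain P R m (k₀+1) t // R k₀ s t} where
  toFun G :=
    ⟨G.1 ⟨1, by omega⟩,
      ⟨⟨fun i => G.1 i.succ, rfl,
        fun i => by
          have h := G.2.2.1 i.succ
          rwa [show k₀ + (i.succ : ℕ) = k₀ + 1 + (i : ℕ) by simp [Fin.val_succ]; omega] at h,
        fun i h => by
          have h' := G.2.2.2 (i+1) (by omega)
          rwa [show k₀ + (i+1) = k₀ + 1 + i by omega] at h'⟩,
      by
        have h' := G.2.2.2 0 (by omega)
        rwa [Nat.add_zero, G.2.1] at h'⟩⟩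
  invFun x :=
    match x with
    | ⟨t, ⟨⟨g, hg0, hgP, hgR⟩, hR⟩⟩ =>
      ⟨prep s g, rfl,
       fun i => by
         match i with
         | ⟨0, _⟩ => simpa [prep] using hs
         | ⟨j+1, hj⟩ =>
           have h := hgP ⟨j, by omega⟩
           show P (k₀ + (j+1)) (g ⟨j, by omega⟩)
           rwa [show k₀ + (j+1) = k₀ + 1 + j by omega],
       fun i h => by
         match i with
         | 0 =>
           show R (k₀ + 0) s (g ⟨0, by omega⟩)
           rwa [Nat.add_zero, hg0]
         | (j+1) =>
           have h' := hgR j (by omega)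
           show R (k₀ + (j+1)) (g ⟨j, by omega⟩) (g ⟨j+1, by omega⟩)
           rwa [show k₀ + (j+1) = k₀ + 1 + j by omega]⟩
  left_inv := by
    rintro ⟨g, h0, hP, hR⟩
    apply Subtype.ext
    funext i
    match i with
    | ⟨0, _⟩ => exact h0.symm
    | ⟨j+1, hj⟩ => rfl
  right_inv := by
    rintro ⟨t, ⟨⟨g, hg0, hgP, hgR⟩, hR⟩⟩
    subst hg0
    rfl

lemma pchain_card (N : ℕ → ℕ) (m : ℕ) : ∀ (k₀ : ℕ) (s : γ), P k₀ s →
    (∀ k, k₀ ≤ k → k < k₀ + m → ∀ x, P k x →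
      Nat.card {t : γ // P (k+1) t ∧ R k x t} = N k) →
    Nat.card (PChain P R m k₀ s) = ∏ j ∈ Finset.range m, N (k₀ + j) := by
  classical
  induction m with
  | zero =>
    intro k₀ s hs _
    rw [Finset.range_zero, Finset.prod_empty]
    rw [Nat.card_eq_one_iff_unique]
    constructor
    · constructor
      rintro ⟨g, hg0, -, -⟩ ⟨g', hg0', -, -⟩
      apply Subtype.ext
      funext i
      have : i = ⟨0, Nat.succ_pos 0⟩ := by
        apply Fin.ext; omega
      rw [this]
      exact hg0.trans hg0'.symm
    · exact ⟨⟨fun _ => s, rfl, fun i => by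
        have : (i : ℕ) = 0 := by omega
        simp [this, hs], fun i h => by omega⟩⟩
  | succ m ih =>
    intro k₀ s hs hstep
    rw [Nat.card_congr (pchain_succ_equiv P R m k₀ s hs)]
    rw [nat_card_sigma]
    have hfib : ∀ t : γ, Nat.card {_g : PChain P R m (k₀+1) t // R k₀ s t} =
        if P (k₀+1) t ∧ R k₀ s t then ∏ j ∈ Finset.range m, N (k₀ + 1 + j) else 0 := by
      intro t
      by_cases hR : R k₀ s t
      · by_cases hP : P (k₀+1) t
        · rw [if_pos ⟨hP, hR⟩]
          rw [Nat.card_congr (Equiv.subtypeUnivEquiv (fun _ => hR))]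
          exact ih (k₀+1) t hP (fun k h1 h2 x hx => hstep k (by omega) (by omega) x hx)
        · rw [if_neg (by tauto)]
          have : IsEmpty (PChain P R m (k₀+1) t) := pchain_empty P R m (k₀+1) t hP
          exact Nat.card_of_isEmpty
      · rw [if_neg (by tauto)]
        have : IsEmpty {_g : PChain P R m (k₀+1) t // R k₀ s t} :=
          ⟨fun x => hR x.2⟩
        exact Nat.card_of_isEmpty
    calc (∑ t : γ, Nat.card {_g : PChain P R m (k₀+1) t // R k₀ s t})
        = ∑ t : γ, if P (k₀+1) t ∧ R k₀ s t then ∏ j ∈ Finset.range m, N (k₀+1+j) else 0 := by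
          exact Finset.sum_congr rfl (fun t _ => hfib t)
      _ = (Finset.univ.filter (fun t => P (k₀+1) t ∧ R k₀ s t)).card *
            ∏ j ∈ Finset.range m, N (k₀+1+j) := by
          rw [← Finset.sum_filter, Finset.sum_const, smul_eq_mul]
      _ = N k₀ * ∏ j ∈ Finset.range m, N (k₀+1+j) := by
          rw [← nat_card_subtype]
          rw [hstep k₀ (le_refl _) (by omega) s hs]
      _ = ∏ j ∈ Finset.range (m+1), N (k₀ + j) := by
          rw [Finset.prod_range_succ']
          rw [mul_comm]
          congr 1
          · exact Finset.prod_congr rfl (fun j _ => by rw [show k₀ + (j+1) = k₀+1+j by omega])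

/-- full chains: levels `0,…,m`. -/
def FullChain (m : ℕ) : Type _ :=
  {g : Fin (m+1) → γ // (∀ i : Fin (m+1), P i (g i)) ∧
    ∀ (i : ℕ) (h : i + 1 < m + 1), R i (g ⟨i, by omega⟩) (g ⟨i+1, h⟩)}

instance (m : ℕ) : Finite (FullChain P R m) := by
  unfold FullChain; infer_instance

def fullchain_equiv (m : ℕ) : FullChain P R m ≃ Σ s : γ, PChain P R m 0 s where
  toFun G := ⟨G.1 ⟨0, Nat.succ_pos m⟩, ⟨G.1, rfl,
    fun i => by simpa using G.2.1 i,
    fun i h => by simpa using G.2.2 i h⟩⟩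
  invFun x := ⟨x.2.1, fun i => by simpa using x.2.2.2.1 i, fun i h => by
    have := x.2.2.2.2 i h
    simpa using this⟩
  left_inv := by rintro ⟨g, h1, h2⟩; rfl
  right_inv := by
    rintro ⟨s, ⟨g, hg0, hgP, hgR⟩⟩
    subst hg0
    rfl

lemma fullchain_card (N : ℕ → ℕ) (m : ℕ)
    (hstep : ∀ k, k < m → ∀ x, P k x →
      Nat.card {t : γ // P (k+1) t ∧ R k x t} = N k) :
    Nat.card (FullChain P R m) =
      Nat.card {s : γ // P 0 s} * ∏ j ∈ Finset.range m, N j := by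
  classical
  rw [Nat.card_congr (fullchain_equiv P R m), nat_card_sigma]
  have hfib : ∀ s : γ, Nat.card (PChain P R m 0 s) =
      if P 0 s then ∏ j ∈ Finset.range m, N j else 0 := by
    intro s
    by_cases hP : P 0 s
    · rw [if_pos hP]
      have := pchain_card P R N m 0 s hP (fun k h1 h2 x hx => hstep k (by omega) x hx)
      simpa using this
    · rw [if_neg hP]
      have : IsEmpty (PChain P R m 0 s) := pchain_empty P R m 0 s hP
      exact Nat.card_of_isEmpty
  calc (∑ s : γ, Nat.card (PChain P R m 0 s))
      = ∑ s : γ, if P 0 s then ∏ j ∈ Finset.range m, N j else 0 :=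
        Finset.sum_congr rfl (fun s _ => hfib s)
    _ = (Finset.univ.filter (fun s => P 0 s)).card * ∏ j ∈ Finset.range m, N j := by
        rw [← Finset.sum_filter, Finset.sum_const, smul_eq_mul]
    _ = _ := by rw [← nat_card_subtype]

end Chains
end GenAux


namespace GenAux

lemma extTuple_pos (n : ℕ) (v : Fin n → ℕ) (k : ℕ) (h1 : 1 ≤ k) (h2 : k ≤ n) :
    extTuple n v k = v ⟨k - 1, by omega⟩ := dif_pos ⟨h1, h2⟩

lemma extTuple_out (n : ℕ) (v : Fin n → ℕ) (k : ℕ) (h : ¬(1 ≤ k ∧ k ≤ n)) :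
    extTuple n v k = 0 := dif_neg h

lemma extTuple_fin (n : ℕ) (v : Fin n → ℕ) (i : Fin n) :
    extTuple n v ((i : ℕ) + 1) = v i := by
  rw [extTuple_pos n v _ (by omega) (by omega)]
  exact congrArg v (Fin.ext (by simp))


lemma extTuple_le (n : ℕ) (v : Fin n → ℕ) (k : ℕ) (hk : k ≤ n)
    (h : ∀ j, 1 ≤ j → j ≤ n → extTuple n v j ≤ 1 + extTuple n v (j - 1)) :
    extTuple n v k ≤ k := by
  induction k with
  | zero => simp [extTuple_out n v 0 (by omega)]
  | succ k ih =>
    have h1 := h (k+1) (by omega) (by omega)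
    simp only [Nat.add_sub_cancel] at h1
    have h2 := ih (by omega)
    omega

variable (m : ℕ)

def smallF (k : ℕ) : Finset (Fin (m+2)) := univ.filter (fun x => (x : ℕ) ≤ k)
def bigF (k : ℕ) : Finset (Fin (m+2)) := univ.filter (fun x => k < (x : ℕ))

lemma mem_smallF {k : ℕ} {x : Fin (m+2)} : x ∈ smallF m k ↔ (x : ℕ) ≤ k := by
  simp [smallF]

lemma mem_bigF {k : ℕ} {x : Fin (m+2)} : x ∈ bigF m k ↔ k < (x : ℕ) := by
  simp [bigF]

lemma smallF_mono {k l : ℕ} (h : k ≤ l) : smallF m k ⊆ smallF m l := by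
  intro x hx
  rw [mem_smallF] at *
  omega

lemma card_smallF {k : ℕ} (h : k ≤ m + 1) : (smallF m k).card = k + 1 := by
  classical
  have hinj : Function.Injective (fun x : Fin (k+1) => (⟨(x : ℕ), by omega⟩ : Fin (m+2))) := by
    intro a b hab
    have hv : (a : ℕ) = (b : ℕ) := by simpa [Fin.ext_iff] using hab
    exact Fin.ext hv
  have himg : smallF m k =
      Finset.image (fun x : Fin (k+1) => (⟨(x : ℕ), by omega⟩ : Fin (m+2))) univ := by
    ext x
    simp only [mem_smallF, Finset.mem_image, Finset.mem_univ, true_and]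
    constructor
    · rintro hx
      exact ⟨⟨(x : ℕ), by omega⟩, Fin.ext rfl⟩
    · rintro ⟨y, rfl⟩
      exact (by omega : (y : ℕ) ≤ k)
  rw [himg, Finset.card_image_of_injective _ hinj, Finset.card_univ, Fintype.card_fin]

lemma bigF_top : bigF m m = {(⟨m+1, by omega⟩ : Fin (m+2))} := by
  ext x
  simp only [mem_bigF, Finset.mem_singleton, Fin.ext_iff]
  have := x.isLt
  omega

variable (v : Fin (m+1) → ℕ)

/-- conditions for the low parts -/
def PA (k : ℕ) (a : Finset (Fin (m+2))) : Prop :=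
  a ⊆ smallF m k ∧ a.card + extTuple (m+1) v (k+1) = k + 1

def RA (_ : ℕ) (a b : Finset (Fin (m+2))) : Prop := a ⊆ b

/-- conditions for the (reversed) high parts -/
def PB (j : ℕ) (t : Finset (Fin (m+2))) : Prop :=
  t ⊆ bigF m (m - j) ∧ t.card = extTuple (m+1) v (m - j + 1)

def RB (j : ℕ) (t u : Finset (Fin (m+2))) : Prop :=
  ∀ x ∈ u, x ∈ t ∨ (x : ℕ) = m - j

lemma countA :
    Nat.card (FullChain (PA m v) (RA m) m) =
      ∏ k ∈ Finset.Icc 1 (m+1),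
        Nat.choose (1 + extTuple (m+1) v (k-1)) (extTuple (m+1) v k) := by
  classical
  have hinit : Nat.card {s : Finset (Fin (m+2)) // PA m v 0 s} =
      Nat.choose (1 + extTuple (m+1) v 0) (extTuple (m+1) v 1) := by
    rw [extTuple_out (m+1) v 0 (by omega)]
    by_cases hc : extTuple (m+1) v 1 ≤ 1
    · have e : {s : Finset (Fin (m+2)) // PA m v 0 s} ≃
          {s : Finset (Fin (m+2)) //
            s ⊆ smallF m 0 ∧ s.card = 1 - extTuple (m+1) v 1} :=
        Equiv.subtypeEquivRight (fun s => by
          unfold PA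
          rw [show (0:ℕ)+1 = 1 from rfl]
          constructor
          · rintro ⟨h1, h2⟩; exact ⟨h1, by omega⟩
          · rintro ⟨h1, h2⟩; exact ⟨h1, by omega⟩)
      rw [Nat.card_congr e, card_subsets, card_smallF m (by omega)]
      simpa using Nat.choose_symm hc
    · have : IsEmpty {s : Finset (Fin (m+2)) // PA m v 0 s} := by
        constructor; rintro ⟨s, h1, h2⟩
        rw [show (0:ℕ)+1 = 1 from rfl] at h2
        omega
      rw [Nat.card_of_isEmpty]
      exact (Nat.choose_eq_zero_of_lt (by omega)).symm
  have hstep : ∀ k, k < m → ∀ x, PA m v k x →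
      Nat.card {t : Finset (Fin (m+2)) // PA m v (k+1) t ∧ RA m k x t} =
        Nat.choose (1 + extTuple (m+1) v (k+1)) (extTuple (m+1) v (k+1+1)) := by
    intro k hk x hx
    obtain ⟨hxU, hxc⟩ := hx
    have hxU' : x ⊆ smallF m (k+1) := hxU.trans (smallF_mono m (by omega))
    by_cases hc : extTuple (m+1) v (k+1+1) ≤ 1 + extTuple (m+1) v (k+1)
    · have e : {t : Finset (Fin (m+2)) // PA m v (k+1) t ∧ RA m k x t} ≃
          {t : Finset (Fin (m+2)) //
            t ⊆ smallF m (k+1) ∧ t.card = (k+1+1) - extTuple (m+1) v (k+1+1) ∧ x ⊆ t} :=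
        Equiv.subtypeEquivRight (fun t => by
          unfold PA RA
          constructor
          · rintro ⟨⟨h1, h2⟩, h3⟩; exact ⟨h1, by omega, h3⟩
          · rintro ⟨h1, h2, h3⟩; exact ⟨⟨h1, by omega⟩, h3⟩)
      rw [Nat.card_congr e, card_supersets _ _ hxU' _ (by omega),
        card_smallF m (by omega)]
      have e1 : k + 1 + 1 - x.card = 1 + extTuple (m+1) v (k+1) := by omega
      have e2 : k + 1 + 1 - extTuple (m+1) v (k+1+1) - x.card =
          1 + extTuple (m+1) v (k+1) - extTuple (m+1) v (k+1+1) := by omega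
      rw [e1, e2]
      exact Nat.choose_symm hc
    · have : IsEmpty {t : Finset (Fin (m+2)) // PA m v (k+1) t ∧ RA m k x t} := by
        constructor; rintro ⟨t, ⟨h1, h2⟩, h3⟩
        have := Finset.card_le_card h3
        omega
      rw [Nat.card_of_isEmpty]
      exact (Nat.choose_eq_zero_of_lt (by omega)).symm
  rw [fullchain_card (PA m v) (RA m)
    (fun k => Nat.choose (1 + extTuple (m+1) v (k+1)) (extTuple (m+1) v (k+1+1))) m hstep,
    hinit]
  have hR : (∏ k ∈ Finset.Icc 1 (m+1),
        Nat.choose (1 + extTuple (m+1) v (k-1)) (extTuple (m+1) v k)) =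
      (∏ i ∈ Finset.range m,
        Nat.choose (1 + extTuple (m+1) v (i+1)) (extTuple (m+1) v (i+1+1))) *
      Nat.choose (1 + extTuple (m+1) v 0) (extTuple (m+1) v 1) := by
    rw [show Finset.Icc 1 (m+1) = Finset.Ico 1 (m+2) from (Finset.Ico_add_one_right_eq_Icc 1 (m+1)).symm,
      Finset.prod_Ico_eq_prod_range, show m + 2 - 1 = m + 1 from rfl]
    have h1 : ∀ i ∈ Finset.range (m+1),
        Nat.choose (1 + extTuple (m+1) v (1+i-1)) (extTuple (m+1) v (1+i)) =
        Nat.choose (1 + extTuple (m+1) v i) (extTuple (m+1) v (i+1)) := by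
      intro i _
      rw [show 1+i-1 = i from by omega, show 1+i = i+1 from by omega]
    rw [Finset.prod_congr rfl h1, Finset.prod_range_succ']
  rw [hR, mul_comm]

lemma countB :
    Nat.card (FullChain (PB m v) (RB m) m) =
      ∏ k ∈ Finset.Icc 1 (m+1),
        Nat.choose (1 + extTuple (m+1) v (k+1)) (extTuple (m+1) v k) := by
  classical
  have hinit : Nat.card {s : Finset (Fin (m+2)) // PB m v 0 s} =
      Nat.choose 1 (extTuple (m+1) v (m+1)) := by
    have e : {s : Finset (Fin (m+2)) // PB m v 0 s} ≃
        {s : Finset (Fin (m+2)) // s ⊆ bigF m m ∧ s.card = extTuple (m+1) v (m+1)} :=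
      Equiv.subtypeEquivRight (fun s => by
        unfold PB
        rw [Nat.sub_zero])
    rw [Nat.card_congr e, card_subsets, bigF_top, Finset.card_singleton]
  have hstep : ∀ j, j < m → ∀ x, PB m v j x →
      Nat.card {u : Finset (Fin (m+2)) // PB m v (j+1) u ∧ RB m j x u} =
        Nat.choose (1 + extTuple (m+1) v (m - j + 1)) (extTuple (m+1) v (m - j)) := by
    intro j hj x hx
    obtain ⟨hxU, hxc⟩ := hx
    have hex : (⟨m - j, by omega⟩ : Fin (m+2)) ∉ x := by
      intro hmem
      have h := (mem_bigF m).mp (hxU hmem)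
      simp at h
    have equ : {u : Finset (Fin (m+2)) // PB m v (j+1) u ∧ RB m j x u} ≃
        {u : Finset (Fin (m+2)) //
          u ⊆ x ∪ {(⟨m - j, by omega⟩ : Fin (m+2))} ∧
          u.card = extTuple (m+1) v (m - j)} :=
      Equiv.subtypeEquivRight (fun u => by
        unfold PB RB
        constructor
        · rintro ⟨⟨h1, h2⟩, h3⟩
          refine ⟨fun y hy => ?_, ?_⟩
          · rcases h3 y hy with hy' | hy'
            · exact Finset.mem_union_left _ hy'
            · refine Finset.mem_union_right _ ?_
              simp only [Finset.mem_singleton]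
              exact Fin.ext hy'
          · rw [show m - (j+1) + 1 = m - j from by omega] at h2
            exact h2
        · rintro ⟨h1, h2⟩
          refine ⟨⟨fun y hy => ?_, ?_⟩, fun y hy => ?_⟩
          · rcases Finset.mem_union.mp (h1 hy) with hy' | hy'
            · have := (mem_bigF m).mp (hxU hy')
              rw [mem_bigF]
              omega
            · rw [Finset.mem_singleton] at hy'
              rw [mem_bigF, hy']
              simp only [Fin.val_mk]
              omega
          · rw [show m - (j+1) + 1 = m - j from by omega]
            exact h2
          · rcases Finset.mem_union.mp (h1 hy) with hy' | hy'
            · exact Or.inl hy'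
            · rw [Finset.mem_singleton] at hy'
              exact Or.inr (by rw [hy']))
    rw [Nat.card_congr equ, card_subsets,
      Finset.card_union_of_disjoint (Finset.disjoint_singleton_right.mpr hex),
      Finset.card_singleton, hxc, Nat.add_comm]
  rw [fullchain_card (PB m v) (RB m)
    (fun j => Nat.choose (1 + extTuple (m+1) v (m - j + 1)) (extTuple (m+1) v (m - j)))
    m hstep, hinit]
  have hR : (∏ k ∈ Finset.Icc 1 (m+1),
        Nat.choose (1 + extTuple (m+1) v (k+1)) (extTuple (m+1) v k)) =
      (∏ i ∈ Finset.range m,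
        Nat.choose (1 + extTuple (m+1) v (m - i + 1)) (extTuple (m+1) v (m - i))) *
      Nat.choose 1 (extTuple (m+1) v (m+1)) := by
    rw [show Finset.Icc 1 (m+1) = Finset.Ico 1 (m+2) from (Finset.Ico_add_one_right_eq_Icc 1 (m+1)).symm,
      Finset.prod_Ico_eq_prod_range, show m + 2 - 1 = m + 1 from rfl]
    have h1 : ∀ i ∈ Finset.range (m+1),
        Nat.choose (1 + extTuple (m+1) v (1+i+1)) (extTuple (m+1) v (1+i)) =
        Nat.choose (1 + extTuple (m+1) v (i+2)) (extTuple (m+1) v (i+1)) := by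
      intro i _
      rw [show 1+i+1 = i+2 from by omega, show 1+i = i+1 from by omega]
    rw [Finset.prod_congr rfl h1]
    rw [← Finset.prod_range_reflect
      (fun i => Nat.choose (1 + extTuple (m+1) v (i+2)) (extTuple (m+1) v (i+1))) (m+1)]
    have h2 : ∀ i ∈ Finset.range (m+1),
        Nat.choose (1 + extTuple (m+1) v ((m+1-1-i)+2)) (extTuple (m+1) v ((m+1-1-i)+1)) =
        Nat.choose (1 + extTuple (m+1) v ((m-i)+2)) (extTuple (m+1) v ((m-i)+1)) := by
      intro i hi
      rw [Finset.mem_range] at hi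
      rw [show m+1-1-i = m-i from by omega]
    rw [Finset.prod_congr rfl h2, Finset.prod_range_succ']
    have h3 : ∀ i ∈ Finset.range m,
        Nat.choose (1 + extTuple (m+1) v ((m-(i+1))+2)) (extTuple (m+1) v ((m-(i+1))+1)) =
        Nat.choose (1 + extTuple (m+1) v (m-i+1)) (extTuple (m+1) v (m-i)) := by
      intro i hi
      rw [Finset.mem_range] at hi
      rw [show m-(i+1)+2 = m-i+1 from by omega, show m-(i+1)+1 = m-i from by omega]
    rw [Finset.prod_congr rfl h3]
    have h4 : Nat.choose (1 + extTuple (m+1) v ((m-0)+2)) (extTuple (m+1) v ((m-0)+1)) =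
        Nat.choose 1 (extTuple (m+1) v (m+1)) := by
      rw [show m-0+2 = m+2 from by omega, show m-0+1 = m+1 from by omega,
        extTuple_out (m+1) v (m+2) (by omega), Nat.add_zero]
    rw [h4]
  rw [hR, mul_comm]

end GenAux

namespace GenAux

variable (m : ℕ)

/-- the genocchi chain conditions -/
def GCond (S : Fin (m+1) → Finset (Fin (m+2))) : Prop :=
  (∀ i : Fin (m+1), (S i).card = (i : ℕ) + 1) ∧
  (∀ i : Fin (m+1), ∀ h : (i : ℕ) + 1 < m + 1,
    S i ⊆ S ⟨(i : ℕ) + 1, h⟩ ∪ {⟨(i : ℕ) + 1, by omega⟩})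

def statJ (S : Fin (m+1) → Finset (Fin (m+2))) : Fin (m+1) → ℕ :=
  fun i => ((S i).filter (fun x : Fin (m+2) => (i : ℕ) < (x : ℕ))).card

def lowS (S : Fin (m+1) → Finset (Fin (m+2))) : Fin (m+1) → Finset (Fin (m+2)) :=
  fun i => (S i).filter (fun x : Fin (m+2) => (x : ℕ) ≤ (i : ℕ))

def highS (S : Fin (m+1) → Finset (Fin (m+2))) : Fin (m+1) → Finset (Fin (m+2)) :=
  fun j => (S ⟨m - (j : ℕ), by omega⟩).filter (fun x : Fin (m+2) => m - (j : ℕ) < (x : ℕ))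

def unS (a b : Fin (m+1) → Finset (Fin (m+2))) : Fin (m+1) → Finset (Fin (m+2)) :=
  fun i => a i ∪ b ⟨m - (i : ℕ), by omega⟩

lemma unS_low_high (S : Fin (m+1) → Finset (Fin (m+2))) :
    unS m (lowS m S) (highS m S) = S := by
  funext i
  unfold unS lowS highS
  have h1 : m - (m - (i : ℕ)) = (i : ℕ) := by omega
  simp only [h1]
  have h2 : (⟨(i : ℕ), by omega⟩ : Fin (m+1)) = i := Fin.ext rfl
  rw [h2]
  have h3 : (S i).filter (fun x : Fin (m+2) => (i : ℕ) < (x : ℕ)) =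
      (S i).filter (fun x : Fin (m+2) => ¬((x : ℕ) ≤ (i : ℕ))) :=
    Finset.filter_congr (fun x _ => by omega)
  rw [h3, Finset.filter_union_filter_not_eq]

lemma lowS_unS (a b : Fin (m+1) → Finset (Fin (m+2)))
    (ha : ∀ i : Fin (m+1), a i ⊆ smallF m (i : ℕ))
    (hb : ∀ j : Fin (m+1), b j ⊆ bigF m (m - (j : ℕ))) :
    lowS m (unS m a b) = a := by
  funext i
  unfold lowS unS
  rw [Finset.filter_union]
  have h1 : (a i).filter (fun x : Fin (m+2) => (x : ℕ) ≤ (i : ℕ)) = a i :=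
    Finset.filter_true_of_mem (fun x hx => (mem_smallF m).mp (ha i hx))
  have h2 : (b ⟨m - (i : ℕ), by omega⟩).filter (fun x : Fin (m+2) => (x : ℕ) ≤ (i : ℕ)) = ∅ := by
    apply Finset.filter_false_of_mem
    intro x hx
    have := (mem_bigF m).mp (hb ⟨m - (i : ℕ), by omega⟩ hx)
    simp only at this
    omega
  rw [h1, h2, Finset.union_empty]

lemma highS_unS (a b : Fin (m+1) → Finset (Fin (m+2)))
    (ha : ∀ i : Fin (m+1), a i ⊆ smallF m (i : ℕ))
    (hb : ∀ j : Fin (m+1), b j ⊆ bigF m (m - (j : ℕ))) :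
    highS m (unS m a b) = b := by
  funext j
  unfold highS unS
  rw [Finset.filter_union]
  have h1 : m - (m - (j : ℕ)) = (j : ℕ) := by omega
  have h2 : (a ⟨m - (j : ℕ), by omega⟩).filter (fun x : Fin (m+2) => m - (j : ℕ) < (x : ℕ)) = ∅ := by
    apply Finset.filter_false_of_mem
    intro x hx
    have := (mem_smallF m).mp (ha ⟨m - (j : ℕ), by omega⟩ hx)
    simp only at this
    omega
  have h3 : (b ⟨m - (m - (j : ℕ)), by omega⟩).filter (fun x : Fin (m+2) => m - (j : ℕ) < (x : ℕ)) =
      b ⟨m - (m - (j : ℕ)), by omega⟩ := by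
    apply Finset.filter_true_of_mem
    intro x hx
    have := (mem_bigF m).mp (hb ⟨m - (m - (j : ℕ)), by omega⟩ hx)
    simp only [h1] at this ⊢
    omega
  rw [h2, h3, Finset.empty_union]
  have h4 : (⟨m - (m - (j : ℕ)), by omega⟩ : Fin (m+1)) = j := Fin.ext (by simp only [h1])
  rw [h4]

end GenAux

namespace GenAux

variable (m : ℕ) (v : Fin (m+1) → ℕ)

lemma condA_of (S : Fin (m+1) → Finset (Fin (m+2))) (hc : GCond m S) (hv : statJ m S = v) :
    (∀ i : Fin (m+1), PA m v (i : ℕ) (lowS m S i)) ∧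
    (∀ (i : ℕ) (h : i+1 < m+1), RA m i (lowS m S ⟨i, by omega⟩) (lowS m S ⟨i+1, h⟩)) := by
  constructor
  · intro i
    constructor
    · intro x hx
      rw [mem_smallF]
      exact (Finset.mem_filter.mp hx).2
    · have hcard := hc.1 i
      have hstat : ((S i).filter (fun x : Fin (m+2) => (i : ℕ) < (x : ℕ))).card = v i :=
        congrFun hv i
      have hsplit := Finset.card_filter_add_card_filter_not
        (s := S i) (p := fun x : Fin (m+2) => (x : ℕ) ≤ (i : ℕ))
      have hneg : (S i).filter (fun x : Fin (m+2) => ¬((x : ℕ) ≤ (i : ℕ))) =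
          (S i).filter (fun x : Fin (m+2) => (i : ℕ) < (x : ℕ)) :=
        Finset.filter_congr (fun x _ => by omega)
      rw [hneg, hstat, hcard] at hsplit
      rw [extTuple_fin]
      unfold lowS
      omega
  · intro i h x hx
    obtain ⟨hxS, hxle⟩ := Finset.mem_filter.mp hx
    have h' : (i : ℕ) + 1 < m + 1 := h
    have hsub := hc.2 ⟨i, by omega⟩ h'
    rcases Finset.mem_union.mp (hsub hxS) with h1 | h1
    · refine Finset.mem_filter.mpr ⟨h1, ?_⟩
      simp only [Fin.val_mk] at hxle ⊢
      omega
    · rw [Finset.mem_singleton] at h1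
      have hxv : (x : ℕ) = i + 1 := by rw [h1]
      simp only [Fin.val_mk] at hxle
      omega

lemma condB_of (S : Fin (m+1) → Finset (Fin (m+2))) (hc : GCond m S) (hv : statJ m S = v) :
    (∀ j : Fin (m+1), PB m v (j : ℕ) (highS m S j)) ∧
    (∀ (j : ℕ) (h : j+1 < m+1), RB m j (highS m S ⟨j, by omega⟩) (highS m S ⟨j+1, h⟩)) := by
  constructor
  · intro j
    constructor
    · intro x hx
      rw [mem_bigF]
      exact (Finset.mem_filter.mp hx).2
    · rw [extTuple_pos (m+1) v (m - (j : ℕ) + 1) (by omega) (by omega)]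
      have hidx : (⟨m - (j : ℕ) + 1 - 1, by omega⟩ : Fin (m+1)) = ⟨m - (j : ℕ), by omega⟩ :=
        Fin.ext (by simp only [Fin.val_mk]; omega)
      rw [hidx]
      exact congrFun hv ⟨m - (j : ℕ), by omega⟩
  · intro j h x hx
    obtain ⟨hxS, hxgt⟩ := Finset.mem_filter.mp hx
    by_cases hval : (x : ℕ) = m - j
    · exact Or.inr hval
    · left
      have h' : (m - (j+1)) + 1 < m + 1 := by omega
      have hsub := hc.2 ⟨m - (j+1), by omega⟩ h'
      rcases Finset.mem_union.mp (hsub hxS) with h1 | h1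
      · have hidx : (⟨m - (j+1) + 1, h'⟩ : Fin (m+1)) = ⟨m - j, by omega⟩ :=
          Fin.ext (by simp only [Fin.val_mk]; omega)
        rw [hidx] at h1
        refine Finset.mem_filter.mpr ⟨h1, ?_⟩
        simp only [Fin.val_mk] at hxgt ⊢
        omega
      · rw [Finset.mem_singleton] at h1
        have hxv : (x : ℕ) = m - (j+1) + 1 := by rw [h1]
        simp only [Fin.val_mk] at hxgt
        omega

lemma condAB_to (a b : Fin (m+1) → Finset (Fin (m+2)))
    (hA : (∀ i : Fin (m+1), PA m v (i : ℕ) (a i)) ∧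
      (∀ (i : ℕ) (h : i+1 < m+1), RA m i (a ⟨i, by omega⟩) (a ⟨i+1, h⟩)))
    (hB : (∀ j : Fin (m+1), PB m v (j : ℕ) (b j)) ∧
      (∀ (j : ℕ) (h : j+1 < m+1), RB m j (b ⟨j, by omega⟩) (b ⟨j+1, h⟩))) :
    GCond m (unS m a b) ∧ statJ m (unS m a b) = v := by
  have key : ∀ i : Fin (m+1),
      ((unS m a b i).filter (fun x : Fin (m+2) => (i : ℕ) < (x : ℕ))) =
        b ⟨m - (i : ℕ), by omega⟩ := by
    intro i
    have hi : (i : ℕ) ≤ m := by omega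
    obtain ⟨hbU, hbc⟩ := hB.1 ⟨m - (i : ℕ), by omega⟩
    obtain ⟨haU, hac⟩ := hA.1 i
    unfold unS
    rw [Finset.filter_union]
    have h1 : (a i).filter (fun x : Fin (m+2) => (i : ℕ) < (x : ℕ)) = ∅ := by
      apply Finset.filter_false_of_mem
      intro x hx
      have := (mem_smallF m).mp (haU hx)
      omega
    have h2 : (b ⟨m - (i : ℕ), by omega⟩).filter
        (fun x : Fin (m+2) => (i : ℕ) < (x : ℕ)) = b ⟨m - (i : ℕ), by omega⟩ := by
      apply Finset.filter_true_of_mem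
      intro x hx
      have h3 := (mem_bigF m).mp (hbU hx)
      simp only [Fin.val_mk] at h3
      omega
    rw [h1, h2, Finset.empty_union]
  constructor
  constructor
  · -- cards
    intro i
    have hi : (i : ℕ) ≤ m := by omega
    obtain ⟨hbU, hbc⟩ := hB.1 ⟨m - (i : ℕ), by omega⟩
    obtain ⟨haU, hac⟩ := hA.1 i
    simp only [Fin.val_mk] at hbc
    rw [Nat.sub_sub_self hi] at hbc
    rw [extTuple_fin] at hac
    rw [extTuple_fin] at hbc
    have hdisj : Disjoint (a i) (b ⟨m - (i : ℕ), by omega⟩) := by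
      rw [Finset.disjoint_left]
      intro x hxa hxb
      have h1 := (mem_smallF m).mp (haU hxa)
      have h2 := (mem_bigF m).mp (hbU hxb)
      simp only [Fin.val_mk] at h2
      omega
    unfold unS
    rw [Finset.card_union_of_disjoint hdisj]
    omega
  · -- chain
    intro i h x hx
    have hi1 : (i : ℕ) + 1 ≤ m := by omega
    rcases Finset.mem_union.mp hx with hxa | hxb
    · have hsub := hA.2 (i : ℕ) h
      have hx1 : x ∈ a ⟨(i : ℕ)+1, h⟩ := hsub hxa
      exact Finset.mem_union_left _ (Finset.mem_union_left _ hx1)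
    · have hj : (m - ((i : ℕ)+1)) + 1 < m + 1 := by omega
      have hRB := hB.2 (m - ((i : ℕ)+1)) hj
      have hidx : (⟨m - ((i : ℕ)+1) + 1, hj⟩ : Fin (m+1)) = ⟨m - (i : ℕ), by omega⟩ :=
        Fin.ext (by simp only [Fin.val_mk]; omega)
      rw [hidx] at hRB
      rcases hRB x hxb with h1 | h1
      · exact Finset.mem_union_left _ (Finset.mem_union_right _ h1)
      · refine Finset.mem_union_right _ ?_
        rw [Finset.mem_singleton]
        apply Fin.ext
        simp only [Fin.val_mk] at h1 ⊢
        omega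
  · -- stat
    funext i
    unfold statJ
    rw [key i]
    obtain ⟨hbU, hbc⟩ := hB.1 ⟨m - (i : ℕ), by omega⟩
    simp only [Fin.val_mk] at hbc
    rw [Nat.sub_sub_self (by omega : (i:ℕ) ≤ m)] at hbc
    rw [hbc, extTuple_fin]

def Fib : Type _ :=
  {S : Fin (m+1) → Finset (Fin (m+2)) // GCond m S ∧ statJ m S = v}

def fibEquiv : Fib m v ≃ FullChain (PA m v) (RA m) m × FullChain (PB m v) (RB m) m where
  toFun S := (⟨lowS m S.1, condA_of m v S.1 S.2.1 S.2.2⟩,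
              ⟨highS m S.1, condB_of m v S.1 S.2.1 S.2.2⟩)
  invFun p := ⟨unS m p.1.1 p.2.1, condAB_to m v p.1.1 p.2.1 p.1.2 p.2.2⟩
  left_inv S := Subtype.ext (unS_low_high m S.1)
  right_inv p := by
    obtain ⟨⟨a, hA⟩, ⟨b, hB⟩⟩ := p
    have ha : ∀ i : Fin (m+1), a i ⊆ smallF m (i : ℕ) := fun i => (hA.1 i).1
    have hb : ∀ j : Fin (m+1), b j ⊆ bigF m (m - (j : ℕ)) := fun j => (hB.1 j).1
    exact Prod.ext (Subtype.ext (lowS_unS m a b ha hb)) (Subtype.ext (highS_unS m a b ha hb))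

lemma fib_card : Nat.card (Fib m v) =
    (∏ k ∈ Finset.Icc 1 (m+1),
      Nat.choose (1 + extTuple (m+1) v (k-1)) (extTuple (m+1) v k)) *
    (∏ k ∈ Finset.Icc 1 (m+1),
      Nat.choose (1 + extTuple (m+1) v (k+1)) (extTuple (m+1) v k)) := by
  rw [Nat.card_congr (fibEquiv m v), Nat.card_prod, countA, countB]

end GenAux

end

/-- `h_{n+1} = ∑_{f_1,…,f_n ≥ 0} ∏_{k=1}^n C(1+f_{k-1}, f_k) · ∏_{k=1}^n C(1+f_{k+1}, f_k)`,
with the convention `f_0 = f_{n+1} = 0`. -/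
theorem genocchi_eq_sum_binomials (n : ℕ) :
    genocchi (n + 1) =
      ∑ᶠ f : Fin n → ℕ,
        (∏ k ∈ Finset.Icc 1 n, Nat.choose (1 + extTuple n f (k - 1)) (extTuple n f k)) *
        (∏ k ∈ Finset.Icc 1 n, Nat.choose (1 + extTuple n f (k + 1)) (extTuple n f k)) := by
  classical
  match n with
  | 0 =>
    have hL : genocchi 1 = 1 := by
      rw [genocchi, Nat.card_eq_one_iff_unique]
      constructor
      · constructor
        intro S S'
        apply Subtype.ext
        funext i
        exact i.elim0
      · exact ⟨⟨fun i => i.elim0, fun i => i.elim0, fun i h => i.elim0⟩⟩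
    rw [hL]
    have hIcc : Finset.Icc 1 0 = (∅ : Finset ℕ) := by
      apply Finset.Icc_eq_empty
      omega
    rw [finsum_unique]
    simp [hIcc]
  | (m + 1) =>
    -- the genocchi count as a subtype over GCond
    have h0 : genocchi (m + 2) =
        Nat.card {S : Fin (m+1) → Finset (Fin (m+2)) // GenAux.GCond m S} := rfl
    set T : Finset (Fin (m+1) → ℕ) := Finset.Icc 0 (fun _ => m+1) with hT
    have hmem : ∀ S ∈ Finset.univ.filter (GenAux.GCond m), GenAux.statJ m S ∈ T := by
      intro S hS
      rw [Finset.mem_filter] at hS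
      rw [hT, Finset.mem_Icc]
      refine ⟨Pi.le_def.mpr fun i => Nat.zero_le _, Pi.le_def.mpr fun i => ?_⟩
      have hle : GenAux.statJ m S i ≤ (S i).card := Finset.card_filter_le _ _
      have hc := hS.2.1 i
      have := i.isLt
      show GenAux.statJ m S i ≤ m+1
      omega
    have h1 : Nat.card {S : Fin (m+1) → Finset (Fin (m+2)) // GenAux.GCond m S} =
        ∑ v ∈ T, Nat.card (GenAux.Fib m v) := by
      rw [GenAux.nat_card_subtype]
      rw [Finset.card_eq_sum_card_fiberwise hmem]
      refine Finset.sum_congr rfl (fun v _ => ?_)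
      rw [Finset.filter_filter]
      rw [← GenAux.nat_card_subtype]
      rfl
    have h3 : (∑ᶠ f : Fin (m+1) → ℕ,
        (∏ k ∈ Finset.Icc 1 (m+1),
          Nat.choose (1 + extTuple (m+1) f (k - 1)) (extTuple (m+1) f k)) *
        (∏ k ∈ Finset.Icc 1 (m+1),
          Nat.choose (1 + extTuple (m+1) f (k + 1)) (extTuple (m+1) f k))) =
        ∑ f ∈ T,
        (∏ k ∈ Finset.Icc 1 (m+1),
          Nat.choose (1 + extTuple (m+1) f (k - 1)) (extTuple (m+1) f k)) *
        (∏ k ∈ Finset.Icc 1 (m+1),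
          Nat.choose (1 + extTuple (m+1) f (k + 1)) (extTuple (m+1) f k)) := by
      apply finsum_eq_sum_of_support_subset
      intro f hf
      rw [Function.mem_support] at hf
      have hne1 : (∏ k ∈ Finset.Icc 1 (m+1),
          Nat.choose (1 + extTuple (m+1) f (k - 1)) (extTuple (m+1) f k)) ≠ 0 :=
        fun hz => hf (by rw [hz, zero_mul])
      have hne : ∀ k ∈ Finset.Icc 1 (m+1),
          Nat.choose (1 + extTuple (m+1) f (k - 1)) (extTuple (m+1) f k) ≠ 0 :=
        Finset.prod_ne_zero_iff.mp hne1
      have hstep : ∀ j, 1 ≤ j → j ≤ m+1 →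
          extTuple (m+1) f j ≤ 1 + extTuple (m+1) f (j - 1) := by
        intro j hj1 hj2
        have := hne j (Finset.mem_Icc.mpr ⟨hj1, hj2⟩)
        by_contra hcon
        exact this (Nat.choose_eq_zero_of_lt (by omega))
      rw [Finset.mem_coe, hT, Finset.mem_Icc]
      refine ⟨Pi.le_def.mpr fun i => Nat.zero_le _, Pi.le_def.mpr fun i => ?_⟩
      have h4 := GenAux.extTuple_le (m+1) f ((i : ℕ)+1) (by omega) hstep
      rw [GenAux.extTuple_fin] at h4
      have := i.isLt
      show f i ≤ m+1
      omega
    rw [h0, h1, h3]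
    exact Finset.sum_congr rfl (fun v _ => GenAux.fib_card m v)
end

section
/- The normalized median Genocchi number satisfies h_{n+1} = \sum_{f ∈ M_{n+1}} \prod_{k=1}^{n}(1+f_k)^2 / 2^{l(f)}, where M_{n+1} is the set of Motzkin paths f_0=0, f_1, ..., f_{n+1}=0 and l(f) is the number of indices i with f_{i+1} = f_i + 1 plus the number of indices i with f_{i+1} = f_i - 1. -/
/-- The set of Motzkin paths `f_0 = 0, f_1, …, f_{n+1} = 0` (encoded by their interior
values `f_1, …, f_n`): sequences of non-negative integers with `|f_{i+1} - f_i| ≤ 1`. -/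
def motzkinSet (n : ℕ) : Set (Fin n → ℕ) :=
  {f | ∀ i ≤ n,
    extTuple n f (i + 1) = extTuple n f i + 1 ∨
    extTuple n f (i + 1) = extTuple n f i ∨
    extTuple n f i = extTuple n f (i + 1) + 1}

/-- `l(f)`: the number of rises plus the number of falls of the Motzkin path `f`. -/
def risesFalls (n : ℕ) (f : Fin n → ℕ) : ℕ :=
  ((Finset.range (n + 1)).filter fun i => extTuple n f (i + 1) = extTuple n f i + 1).card +
  ((Finset.range (n + 1)).filter fun i => extTuple n f i = extTuple n f (i + 1) + 1).card

/-!
Adjoin `S_0 = ∅` and split each `S_k` into its part `L_k` below `k` and its part `T_k` at or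
above `k` (elements numbered from `0`). The condition `S_k ⊆ S_{k+1} ∪ {k}` splits into
`L_k ⊆ L_{k+1}` and `T_k ⊆ T_{k+1} ∪ {k}`, so `f_k = #T_k` is a Motzkin path. For a fixed
path, the `L_k` are chosen upwards, with `C(1 + f_k, f_{k+1})` choices at each step, and the
`T_k` downwards, with `C(1 + f_{k+1}, f_k)` choices. For `|a - b| ≤ 1` one has
`C(1 + a, b) C(1 + b, a) = (1 + a)(1 + b) / 2^[a ≠ b]`, and the product over the steps of the
path telescopes to `∏ (1 + f_k)^2 / 2^l(f)`.
-/

open Finset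

section LayeredWalks

variable {α : Type*} [Fintype α] [DecidableEq α]

def layeredWalks {m : ℕ} (V : Fin (m + 1) → Finset α) (R : Fin m → α → α → Prop)
    [∀ i, DecidableRel (R i)] : Finset (Fin (m + 1) → α) :=
  {x | (∀ i, x i ∈ V i) ∧ ∀ i, R i (x i.castSucc) (x i.succ)}

variable {m : ℕ} {V : Fin (m + 1) → Finset α} {R : Fin m → α → α → Prop}
  [∀ i, DecidableRel (R i)]

lemma mem_layeredWalks {x : Fin (m + 1) → α} :
    x ∈ layeredWalks V R ↔ (∀ i, x i ∈ V i) ∧ ∀ i, R i (x i.castSucc) (x i.succ) := by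
  simp [layeredWalks]

theorem card_layeredWalks (c : Fin m → ℕ)
    (hc : ∀ i, ∀ a ∈ V i.castSucc, #{b ∈ V i.succ | R i a b} = c i) :
    #(layeredWalks V R) = #(V 0) * ∏ i, c i := by
  induction m with
  | zero =>
    rw [Fin.prod_univ_zero, mul_one]
    have h0 (i : Fin (0 + 1)) : i = 0 := Subsingleton.elim (α := Fin 1) _ _
    refine card_nbij' (fun x => x 0) (fun a _ => a) (fun x hx => (mem_layeredWalks.1 hx).1 0)
      (fun a ha => mem_layeredWalks.2 ⟨fun i => by rwa [h0 i], fun i => i.elim0⟩)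
      (fun x _ => funext fun i => by rw [h0 i]) fun _ _ => rfl
  | succ m ih =>
    have hinit : Set.MapsTo (fun x : Fin (m + 2) → α => Fin.init x) (layeredWalks V R)
        (layeredWalks (fun i => V i.castSucc) fun i => R i.castSucc) := fun x hx =>
      mem_layeredWalks.2 ⟨fun i => (mem_layeredWalks.1 hx).1 _,
        fun i => (mem_layeredWalks.1 hx).2 i.castSucc⟩
    have hfiber : ∀ y ∈ layeredWalks (fun i => V i.castSucc) (fun i => R i.castSucc),
        #{x ∈ layeredWalks V R | Fin.init x = y} = c (Fin.last m) := by
      intro y hy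
      rw [mem_layeredWalks] at hy
      rw [← hc (Fin.last m) (y (Fin.last m)) (hy.1 _)]
      refine card_nbij' (fun x => x (Fin.last _)) (fun b => Fin.snoc y b) ?_ ?_ ?_ ?_
      · intro x hx
        simp only [mem_coe, mem_filter, mem_layeredWalks] at hx ⊢
        obtain ⟨⟨hV, hR⟩, rfl⟩ := hx
        exact ⟨hV _, hR (Fin.last m)⟩
      · intro b hb
        simp only [mem_coe, mem_filter, mem_layeredWalks] at hb ⊢
        refine ⟨⟨fun i => ?_, fun i => ?_⟩, Fin.init_snoc _ _⟩
        · induction i using Fin.lastCases with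
          | last => simpa using hb.1
          | cast i => simpa using hy.1 i
        · induction i using Fin.lastCases with
          | last => simpa using hb.2
          | cast i =>
            rw [Fin.succ_castSucc, Fin.snoc_castSucc, Fin.snoc_castSucc]
            exact hy.2 i
      · intro x hx
        simp only [mem_coe, mem_filter] at hx
        simp only [← hx.2, Fin.snoc_init_self]
      · intro b _
        simp
    rw [card_eq_sum_card_fiberwise hinit, sum_congr rfl hfiber, sum_const, smul_eq_mul,
      ih _ fun i => hc i.castSucc, Fin.prod_univ_castSucc, mul_assoc, Fin.castSucc_zero]

theorem card_layeredWalks_of_rev (c : Fin m → ℕ)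
    (hc : ∀ i, ∀ b ∈ V i.succ, #{a ∈ V i.castSucc | R i a b} = c i) :
    #(layeredWalks V R) = #(V (Fin.last m)) * ∏ i, c i := by
  have hrev := card_layeredWalks (V := fun i => V i.rev) (R := fun i a b => R i.rev b a)
    (fun i => c i.rev) fun i a ha => by
      rw [Fin.rev_castSucc] at ha
      rw [Fin.rev_succ]
      exact hc i.rev a ha
  rw [Fin.rev_zero, Fintype.prod_equiv Fin.revPerm (fun i => c i.rev) c fun _ => rfl] at hrev
  rw [← hrev]
  refine card_nbij' (fun x => x ∘ Fin.rev) (fun x => x ∘ Fin.rev) ?_ ?_ ?_ ?_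
  · intro x hx
    simp only [mem_coe, mem_layeredWalks] at hx ⊢
    refine ⟨fun i => hx.1 _, fun i => ?_⟩
    simpa [Fin.rev_castSucc, Fin.rev_succ] using hx.2 i.rev
  · intro x hx
    simp only [mem_coe, mem_layeredWalks] at hx ⊢
    refine ⟨fun i => by simpa using hx.1 i.rev, fun i => ?_⟩
    simpa [Fin.rev_castSucc, Fin.rev_succ] using hx.2 i.rev
  · intro x _
    funext i
    simp
  · intro x _
    funext i
    simp

end LayeredWalks

namespace Nat

lemma choose_add_two_mul_two (a : ℕ) : (a + 2).choose a * 2 = (a + 1) * (a + 2) := by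
  have h := Nat.choose_mul_succ_eq (a + 1) a
  rw [Nat.choose_succ_self_right, show a + 1 + 1 - a = 2 by omega] at h
  rw [← h]

lemma choose_mul_choose_mul_two_pow {a b : ℕ} (h₁ : b ≤ a + 1) (h₂ : a ≤ b + 1) :
    (1 + a).choose b * (1 + b).choose a *
        2 ^ ((if b = a + 1 then 1 else 0) + if a = b + 1 then 1 else 0) =
      (1 + a) * (1 + b) := by
  rcases (by omega : b = a + 1 ∨ b = a ∨ a = b + 1) with rfl | rfl | rfl
  · rw [if_pos rfl, if_neg (by omega), add_comm 1 a, Nat.choose_self,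
      show 1 + (a + 1) = a + 2 by ring, one_mul, add_zero, pow_one, choose_add_two_mul_two]
  · simp [add_comm 1 b, Nat.choose_succ_self_right]
  · rw [if_neg (by omega), if_pos rfl, add_comm 1 b, Nat.choose_self,
      show 1 + (b + 1) = b + 2 by ring, mul_one, zero_add, pow_one, choose_add_two_mul_two]
    ring

end Nat

lemma Finset.prod_range_succ_mul_eq_prod_Icc_sq {M : Type*} [CommMonoid M] (n : ℕ) (g : ℕ → M)
    (h₀ : g 0 = 1) (h₁ : g (n + 1) = 1) :
    ∏ k ∈ range (n + 1), g k * g (k + 1) = ∏ k ∈ Icc 1 n, g k ^ 2 := by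
  rw [prod_mul_distrib, prod_range_succ', prod_range_succ, h₀, h₁, mul_one,
    ← prod_mul_distrib, ← Ico_add_one_right_eq_Icc, ← prod_Ico_add' _ 0 n 1, ← range_eq_Ico]
  simp only [sq]

section Motzkin

variable {n : ℕ} {f : Fin n → ℕ}

lemma extTuple_zero (f : Fin n → ℕ) : extTuple n f 0 = 0 := by
  simp [extTuple]

lemma extTuple_of_lt (f : Fin n → ℕ) {k : ℕ} (hk : n < k) : extTuple n f k = 0 := by
  rw [extTuple, dif_neg (by omega)]

lemma extTuple_succ (f : Fin n → ℕ) (i : Fin n) : extTuple n f (i + 1) = f i := by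
  rw [extTuple, dif_pos ⟨by omega, i.isLt⟩]
  rfl

lemma extTuple_le_of_mem_motzkinSet (hf : f ∈ motzkinSet n) (k : ℕ) : extTuple n f k ≤ k := by
  induction k with
  | zero => simp [extTuple_zero]
  | succ k ih =>
    by_cases hk : k ≤ n
    · have := hf k hk
      omega
    · rw [extTuple_of_lt f (by omega)]
      omega

lemma motzkinSet_finite (n : ℕ) : (motzkinSet n).Finite :=
  (Set.finite_Iic fun _ : Fin n => n).subset fun f hf => Set.mem_Iic.2 fun i => by
    have := extTuple_le_of_mem_motzkinSet hf (i + 1)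
    rw [extTuple_succ] at this
    have := i.isLt
    show f i ≤ n
    omega

lemma two_pow_risesFalls (f : Fin n → ℕ) :
    2 ^ risesFalls n f = ∏ k ∈ range (n + 1),
      2 ^ ((if extTuple n f (k + 1) = extTuple n f k + 1 then 1 else 0) +
        if extTuple n f k = extTuple n f (k + 1) + 1 then 1 else 0) := by
  rw [risesFalls, card_filter, card_filter, ← sum_add_distrib, prod_pow_eq_pow_sum]

theorem prod_choose_mul_two_pow_risesFalls (hf : f ∈ motzkinSet n) :
    (∏ k ∈ range n, (1 + extTuple n f k).choose (extTuple n f (k + 1))) *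
        ((1 : ℕ).choose (extTuple n f n) *
          ∏ k ∈ range n, (1 + extTuple n f (k + 1)).choose (extTuple n f k)) *
        2 ^ risesFalls n f =
      ∏ k ∈ Icc 1 n, (1 + extTuple n f k) ^ 2 := by
  have hlast := extTuple_of_lt f (Nat.lt_succ_self n)
  have hlower : ∏ k ∈ range n, (1 + extTuple n f k).choose (extTuple n f (k + 1)) =
      ∏ k ∈ range (n + 1), (1 + extTuple n f k).choose (extTuple n f (k + 1)) := by
    rw [prod_range_succ, hlast, Nat.choose_zero_right, mul_one]
  have hupper : (1 : ℕ).choose (extTuple n f n) *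
      ∏ k ∈ range n, (1 + extTuple n f (k + 1)).choose (extTuple n f k) =
      ∏ k ∈ range (n + 1), (1 + extTuple n f (k + 1)).choose (extTuple n f k) := by
    rw [prod_range_succ, hlast, mul_comm]
  rw [hlower, hupper, two_pow_risesFalls, ← prod_mul_distrib, ← prod_mul_distrib,
    ← prod_range_succ_mul_eq_prod_Icc_sq n (fun k => 1 + extTuple n f k)
      (by simp [extTuple_zero]) (by simp [hlast])]
  refine prod_congr rfl fun k hk => ?_
  have := hf k (Nat.lt_succ_iff.1 (mem_range.1 hk))
  exact Nat.choose_mul_choose_mul_two_pow (by omega) (by omega)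

end Motzkin

namespace Genocchi

variable {n : ℕ}

/-- `S k` is the paper's `S_k` for `1 ≤ k ≤ n`, with `S 0 = ∅` adjoined; the element
`x : Fin (n + 1)` stands for `x + 1 ∈ {1, …, n + 1}`. -/
def chains (n : ℕ) : Finset (Fin (n + 1) → Finset (Fin (n + 1))) :=
  {S | (∀ k, #(S k) = k) ∧ ∀ k : Fin n, S k.castSucc ⊆ S k.succ ∪ {k.castSucc}}

def lower (S : Fin (n + 1) → Finset (Fin (n + 1))) (k : Fin (n + 1)) : Finset (Fin (n + 1)) :=
  {x ∈ S k | x < k}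

def upper (S : Fin (n + 1) → Finset (Fin (n + 1))) (k : Fin (n + 1)) : Finset (Fin (n + 1)) :=
  {x ∈ S k | k ≤ x}

variable {S : Fin (n + 1) → Finset (Fin (n + 1))}

lemma mem_chains :
    S ∈ chains n ↔
      (∀ k, #(S k) = k) ∧ ∀ k : Fin n, S k.castSucc ⊆ S k.succ ∪ {k.castSucc} := by
  simp [chains]

lemma lower_subset_Iio (k : Fin (n + 1)) : lower S k ⊆ Iio k := fun _ hx =>
  mem_Iio.2 (mem_filter.1 hx).2

lemma upper_subset_Ici (k : Fin (n + 1)) : upper S k ⊆ Ici k := fun _ hx =>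
  mem_Ici.2 (mem_filter.1 hx).2

lemma card_lower_add_card_upper (k : Fin (n + 1)) : #(lower S k) + #(upper S k) = #(S k) := by
  rw [lower, upper]
  simpa only [not_lt] using card_filter_add_card_filter_not (· < k) (s := S k)

lemma lower_union_upper (k : Fin (n + 1)) : lower S k ∪ upper S k = S k := by
  rw [lower, upper]
  simpa only [not_lt] using filter_union_filter_not_eq (· < k) (S k)

lemma lower_union {L T : Fin (n + 1) → Finset (Fin (n + 1))} {k : Fin (n + 1)}
    (hL : L k ⊆ Iio k) (hT : T k ⊆ Ici k) : lower (fun k => L k ∪ T k) k = L k := by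
  rw [lower, filter_union, filter_true_of_mem fun x hx => mem_Iio.1 (hL hx),
    filter_false_of_mem fun x hx => not_lt.2 (mem_Ici.1 (hT hx)), union_empty]

lemma upper_union {L T : Fin (n + 1) → Finset (Fin (n + 1))} {k : Fin (n + 1)}
    (hL : L k ⊆ Iio k) (hT : T k ⊆ Ici k) : upper (fun k => L k ∪ T k) k = T k := by
  rw [upper, filter_union, filter_false_of_mem fun x hx => not_le.2 (mem_Iio.1 (hL hx)),
    filter_true_of_mem fun x hx => mem_Ici.1 (hT hx), empty_union]

lemma lower_castSucc_subset (hS : S ∈ chains n) (k : Fin n) :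
    lower S k.castSucc ⊆ lower S k.succ := by
  intro x hx
  rw [lower, mem_filter] at hx ⊢
  rcases mem_union.1 ((mem_chains.1 hS).2 k hx.1) with h | h
  · exact ⟨h, hx.2.trans Fin.castSucc_lt_succ⟩
  · exact absurd (mem_singleton.1 h) hx.2.ne

lemma upper_castSucc_subset (hS : S ∈ chains n) (k : Fin n) :
    upper S k.castSucc ⊆ upper S k.succ ∪ {k.castSucc} := by
  intro x hx
  rw [upper, mem_filter] at hx
  rw [mem_union, mem_singleton, upper, mem_filter]
  rcases eq_or_ne x k.castSucc with h | h
  · exact Or.inr h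
  · have hx' := (mem_chains.1 hS).2 k hx.1
    rw [mem_union, mem_singleton, or_iff_left h] at hx'
    exact Or.inl ⟨hx', Fin.castSucc_lt_iff_succ_le.1 (lt_of_le_of_ne hx.2 h.symm)⟩

def lowerWalks (n : ℕ) (e : ℕ → ℕ) : Finset (Fin (n + 1) → Finset (Fin (n + 1))) :=
  layeredWalks (fun k : Fin (n + 1) => powersetCard (k - e k) (Iio k)) fun _ a b => a ⊆ b

def upperWalks (n : ℕ) (e : ℕ → ℕ) : Finset (Fin (n + 1) → Finset (Fin (n + 1))) :=
  layeredWalks (fun k : Fin (n + 1) => powersetCard (e k) (Ici k))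
    fun k a b => a ⊆ b ∪ {k.castSucc}

theorem card_lowerWalks (e : ℕ → ℕ) (he : ∀ k < n, e k ≤ k ∧ e (k + 1) ≤ e k + 1) :
    #(lowerWalks n e) = ∏ k ∈ range n, (1 + e k).choose (e (k + 1)) := by
  rw [lowerWalks, ← Fin.prod_univ_eq_prod_range, card_layeredWalks
    (fun k : Fin n => (1 + e k).choose (e (k + 1))) fun k a ha => ?_]
  · simp
  rw [mem_powersetCard] at ha
  obtain ⟨hek, hstep⟩ := he k k.isLt
  have hsub : a ⊆ Iio k.succ := ha.1.trans (Iio_subset_Iio Fin.castSucc_lt_succ.le)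
  simp only [Fin.val_castSucc, Fin.val_succ] at ha ⊢
  rw [card_filter_powersetCard_subset _ _ _ hsub (by omega), ha.2, Fin.card_Iio, Fin.val_succ,
    show k + 1 - (k - e k) = 1 + e k by omega,
    show k + 1 - e (k + 1) - (k - e k) = 1 + e k - e (k + 1) by omega, Nat.choose_symm (by omega)]

theorem card_upperWalks (e : ℕ → ℕ) :
    #(upperWalks n e) =
      (1 : ℕ).choose (e n) * ∏ k ∈ range n, (1 + e (k + 1)).choose (e k) := by
  rw [upperWalks, ← Fin.prod_univ_eq_prod_range, card_layeredWalks_of_rev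
    (fun k : Fin n => (1 + e (k + 1)).choose (e k)) fun k b hb => ?_]
  · simp
  rw [mem_powersetCard] at hb
  have hk : k.castSucc ∉ b := fun h => Fin.castSucc_lt_succ.not_ge (mem_Ici.1 (hb.1 h))
  have hfilter : {a ∈ powersetCard (e k.castSucc) (Ici k.castSucc) | a ⊆ b ∪ {k.castSucc}} =
      powersetCard (e k) (b ∪ {k.castSucc}) := by
    ext a
    simp only [mem_filter, mem_powersetCard, Fin.val_castSucc]
    refine ⟨fun h => ⟨h.2, h.1.2⟩,
      fun h => ⟨⟨h.1.trans (union_subset ?_ ?_), h.2⟩, h.1⟩⟩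
    · exact hb.1.trans (Ici_subset_Ici.2 Fin.castSucc_lt_succ.le)
    · simp
  rw [hfilter, card_powersetCard, card_union_of_disjoint (disjoint_singleton_right.2 hk),
    hb.2, card_singleton, Fin.val_succ, add_comm]

theorem card_filter_chains_eq_card_mul_card (e : ℕ → ℕ) (he : ∀ k ≤ n, e k ≤ k) :
    #{S ∈ chains n | ∀ k, #(upper S k) = e k} = #(lowerWalks n e) * #(upperWalks n e) := by
  rw [← card_product]
  refine card_nbij' (fun S => (lower S, upper S)) (fun P k => P.1 k ∪ P.2 k) ?_ ?_ ?_ ?_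
  · intro S hS
    simp only [mem_coe, mem_filter] at hS
    obtain ⟨hS, hup⟩ := hS
    have hcard (k : Fin (n + 1)) : #(lower S k) = k - e k := by
      have := card_lower_add_card_upper (S := S) k
      rw [(mem_chains.1 hS).1, hup] at this
      omega
    simp only [mem_coe, mem_product, lowerWalks, upperWalks, mem_layeredWalks, mem_powersetCard]
    exact ⟨⟨fun k => ⟨lower_subset_Iio k, hcard k⟩, lower_castSucc_subset hS⟩,
      ⟨fun k => ⟨upper_subset_Ici k, hup k⟩, upper_castSucc_subset hS⟩⟩
  · rintro ⟨L, T⟩ hP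
    simp only [mem_coe, mem_product, lowerWalks, upperWalks, mem_layeredWalks,
      mem_powersetCard] at hP
    obtain ⟨⟨hL, hLL⟩, ⟨hT, hTT⟩⟩ := hP
    simp only [mem_coe, mem_filter, mem_chains]
    refine ⟨⟨fun k => ?_, fun k => ?_⟩, fun k => ?_⟩
    · have hdisj : Disjoint (L k) (T k) := disjoint_left.2 fun x hxL hxT =>
        (mem_Iio.1 ((hL k).1 hxL)).not_ge (mem_Ici.1 ((hT k).1 hxT))
      rw [card_union_of_disjoint hdisj, (hL k).2, (hT k).2]
      have := he k k.is_le
      omega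
    · exact union_subset ((hLL k).trans (subset_union_left.trans subset_union_left))
        ((hTT k).trans (union_subset_union subset_union_right subset_rfl))
    · rw [upper_union (hL k).1 (hT k).1, (hT k).2]
  · intro S _
    funext k
    exact lower_union_upper k
  · rintro ⟨L, T⟩ hP
    simp only [mem_coe, mem_product, lowerWalks, upperWalks, mem_layeredWalks,
      mem_powersetCard] at hP
    simp only [Prod.mk.injEq]
    exact ⟨funext fun k => lower_union (hP.1.1 k).1 (hP.2.1 k).1,
      funext fun k => upper_union (hP.1.1 k).1 (hP.2.1 k).1⟩

def heights (S : Fin (n + 1) → Finset (Fin (n + 1))) : Fin n → ℕ := fun i => #(upper S i.succ)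

lemma extTuple_heights (hS : S ∈ chains n) (k : Fin (n + 1)) :
    extTuple n (heights S) k = #(upper S k) := by
  cases k using Fin.cases with
  | zero =>
    have := card_lower_add_card_upper (S := S) 0
    rw [(mem_chains.1 hS).1, Fin.val_zero] at this
    rw [Fin.val_zero, extTuple_zero]
    omega
  | succ i => exact extTuple_succ _ i

lemma card_upper_castSucc_le (hS : S ∈ chains n) (k : Fin n) :
    #(upper S k.castSucc) ≤ #(upper S k.succ) + 1 :=
  (card_le_card (upper_castSucc_subset hS k)).trans (card_union_le _ _)

lemma card_upper_succ_le (hS : S ∈ chains n) (k : Fin n) :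
    #(upper S k.succ) ≤ #(upper S k.castSucc) + 1 := by
  have hL := card_le_card (lower_castSucc_subset hS k)
  have h₁ := card_lower_add_card_upper (S := S) k.castSucc
  have h₂ := card_lower_add_card_upper (S := S) k.succ
  rw [(mem_chains.1 hS).1, Fin.val_castSucc] at h₁
  rw [(mem_chains.1 hS).1, Fin.val_succ] at h₂
  omega

lemma heights_mem_motzkinSet (hS : S ∈ chains n) : heights S ∈ motzkinSet n := by
  intro i hi
  rcases hi.lt_or_eq with hi | rfl
  · have h₁ := extTuple_heights hS (Fin.castSucc ⟨i, hi⟩)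
    have h₂ := extTuple_heights hS (Fin.succ ⟨i, hi⟩)
    have := card_upper_castSucc_le hS ⟨i, hi⟩
    have := card_upper_succ_le hS ⟨i, hi⟩
    simp only [Fin.val_castSucc, Fin.val_succ] at h₁ h₂
    omega
  · have h := extTuple_heights hS (Fin.last i)
    have hU := card_le_card (upper_subset_Ici (S := S) (Fin.last i))
    rw [Fin.card_Ici, Fin.val_last] at hU
    rw [Fin.val_last] at h
    rw [extTuple_of_lt _ (Nat.lt_succ_self i)]
    omega

lemma heights_eq_iff (hS : S ∈ chains n) (f : Fin n → ℕ) :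
    heights S = f ↔ ∀ k, #(upper S k) = extTuple n f k := by
  refine ⟨fun h k => h ▸ (extTuple_heights hS k).symm, fun h => funext fun i => ?_⟩
  have := h i.succ
  rwa [Fin.val_succ, extTuple_succ] at this

theorem genocchi_succ_eq_card_chains (n : ℕ) : genocchi (n + 1) = #(chains n) := by
  rw [genocchi, Nat.card_eq_fintype_card, Fintype.card_subtype]
  refine card_nbij' (fun S => Fin.cons ∅ S) Fin.tail ?_ ?_ ?_ ?_
  · intro S hS
    simp only [mem_coe, mem_filter, mem_univ, true_and] at hS
    obtain ⟨hcard, hchain⟩ := hS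
    rw [mem_coe, mem_chains]
    refine ⟨fun k => ?_, fun k => ?_⟩
    · cases k using Fin.cases with
      | zero => simp
      | succ i => simpa using hcard i
    · obtain ⟨_ | j, hj⟩ := k
      · simp
      · exact hchain ⟨j, by omega⟩ hj
  · intro S hS
    rw [mem_coe, mem_chains] at hS
    simp only [mem_coe, mem_filter, mem_univ, true_and]
    refine ⟨fun i => by simpa [Fin.tail] using hS.1 i.succ, fun i hi => ?_⟩
    exact hS.2 ⟨i + 1, hi⟩
  · intro S _
    exact Fin.tail_cons _ _
  · intro S hS
    have h0 : S 0 = ∅ := card_eq_zero.1 ((mem_chains.1 hS).1 0)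
    simpa [h0] using Fin.cons_self_tail S

end Genocchi

open Genocchi

/-- `h_{n+1} = ∑_{f ∈ M_{n+1}} ∏_{k=1}^n (1+f_k)^2 / 2^{l(f)}`, the sum being over all
Motzkin paths from `(0,0)` to `(n+1,0)`. -/
theorem genocchi_eq_sum_over_motzkin (n : ℕ) :
    (genocchi (n + 1) : ℚ) =
      ∑ᶠ f ∈ motzkinSet n,
        (∏ k ∈ Finset.Icc 1 n, ((1 + extTuple n f k : ℚ)) ^ 2) / 2 ^ risesFalls n f := by
  have hfin := motzkinSet_finite n
  have hmaps : Set.MapsTo heights (chains n : Set _) (hfin.toFinset : Set (Fin n → ℕ)) :=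
    fun S hS => hfin.mem_toFinset.2 (heights_mem_motzkinSet hS)
  rw [finsum_mem_eq_finite_toFinset_sum _ hfin, genocchi_succ_eq_card_chains,
    card_eq_sum_card_fiberwise hmaps, Nat.cast_sum]
  refine sum_congr rfl fun f hf => ?_
  rw [Set.Finite.mem_toFinset] at hf
  have hbound := extTuple_le_of_mem_motzkinSet hf
  rw [filter_congr fun S hS => heights_eq_iff hS f,
    card_filter_chains_eq_card_mul_card _ fun k _ => hbound k,
    card_lowerWalks _ fun k hk => ⟨hbound k, by have := hf k hk.le; omega⟩, card_upperWalks,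
    eq_div_iff (by positivity)]
  exact_mod_cast prod_choose_mul_two_pow_risesFalls hf
end

section
/- The normalized median Genocchi number h_{n+1} equals the number of pairs of collections of non-negative integers (r_{i,j})_{1≤i≤j≤n}, (m_{i,j})_{1≤i≤j≤n} satisfying, for all k = 1,...,n: \sum_{k'=k}^{n} r_{k,k'} ≤ 1, \sum_{k'=1}^{k} m_{k',k} ≤ 1, and \sum_{i≤k≤j} r_{i,j} = \sum_{i≤k≤j} m_{i,j}. -/
/-!
Read `S_k` as the state at time `k` of the elements `0, …, n`. The condition
`S_k ⊆ S_{k+1} ∪ {k+1}` says that an element, once present, stays present, except that `k + 1`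
may leave at the step from `k` to `k + 1`. Hence for `i ≤ k` the times at which `i` is absent form
an interval `[i, j]`, recorded by `r_{i,j} = 1`, and the times `k ≤ j` at which `j + 1` is present
form an interval `[i, j]`, recorded by `m_{i,j} = 1`; this makes the row sums of `r` and the column
sums of `m` at most `1`. At time `k` the two sides of the coverage condition count the absent
elements `i ≤ k` and the present elements `j + 1 > k`, so `#S_k = k + 1` is exactly the coverage
equality at `k`.

Indices are `0`-based: times and matrix indices lie in `Fin n`, elements in `Fin (n + 1)`, where
the element `i ≤ k` is `i.castSucc` and the element `j + 1` is `j.succ`.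
-/

open Finset

namespace Genocchi

section SumLeOne

variable {ι : Type*} [Fintype ι] {f g : ι → ℕ}

lemma le_one_of_sum_le_one (hf : ∑ j, f j ≤ 1) (j : ι) : f j ≤ 1 :=
  (single_le_sum (fun _ _ => Nat.zero_le _) (mem_univ j)).trans hf

lemma eq_zero_of_sum_le_one (hf : ∑ j, f j ≤ 1) {j j' : ι} (hj : f j ≠ 0) (hne : j' ≠ j) :
    f j' = 0 := by
  have := add_le_sum (f := f) (fun _ _ => Nat.zero_le _) (mem_univ j) (mem_univ j') hne.symm
  omega

lemma sum_ite_eq_of_sum_le_one (hf : ∑ j, f j ≤ 1) (p : ι → Prop) [DecidablePred p] :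
    (∑ j, if p j then f j else 0) = if ∀ j, p j → f j = 0 then 0 else 1 := by
  rw [← sum_filter]
  split_ifs with h
  · exact sum_eq_zero fun j hj => h j (mem_filter.1 hj).2
  · refine le_antisymm ((sum_le_sum_of_subset (filter_subset _ _)).trans hf) ?_
    refine Nat.one_le_iff_ne_zero.2 fun h0 => h fun j hj => ?_
    exact (sum_eq_zero_iff.1 h0) j (mem_filter.2 ⟨mem_univ j, hj⟩)

variable [LinearOrder ι]

lemma ne_zero_of_forall_ge_eq_zero_iff (hf : ∑ j, f j ≤ 1)
    (h : ∀ k, (∀ j ≥ k, f j = 0) ↔ ∀ j ≥ k, g j = 0) {j : ι} (hj : f j ≠ 0) : g j ≠ 0 := by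
  obtain ⟨j', hjj', hj'⟩ : ∃ j' ≥ j, g j' ≠ 0 := by
    by_contra! hg
    exact hj ((h j).2 hg j le_rfl)
  obtain rfl | hlt := hjj'.eq_or_lt
  · exact hj'
  · exact absurd ((h j').1 (fun x hx => eq_zero_of_sum_le_one hf hj (hlt.trans_le hx).ne') j'
      le_rfl) hj'

lemma eq_of_forall_ge_eq_zero_iff (hf : ∑ j, f j ≤ 1) (hg : ∑ j, g j ≤ 1)
    (h : ∀ k, (∀ j ≥ k, f j = 0) ↔ ∀ j ≥ k, g j = 0) : f = g := by
  funext j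
  have hfg := ne_zero_of_forall_ge_eq_zero_iff hf h (j := j)
  have hgf := ne_zero_of_forall_ge_eq_zero_iff hg (fun k => (h k).symm) (j := j)
  have := le_one_of_sum_le_one hf j
  have := le_one_of_sum_le_one hg j
  omega

end SumLeOne

section GreatestIndicator

variable {ι : Type*} [LinearOrder ι]

open Classical in
noncomputable def greatestIndicator (s : Set ι) (j : ι) : ℕ := if IsGreatest s j then 1 else 0

lemma greatestIndicator_eq_zero {s : Set ι} {j : ι} (hj : j ∉ s) : greatestIndicator s j = 0 :=
  if_neg fun h => hj h.1

lemma sum_greatestIndicator_le_one [Fintype ι] (s : Set ι) : ∑ j, greatestIndicator s j ≤ 1 := by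
  classical
  simp only [greatestIndicator, sum_boole, Nat.cast_id]
  exact card_le_one.2 fun a ha b hb => (mem_filter.1 ha).2.unique (mem_filter.1 hb).2

lemma forall_ge_greatestIndicator_eq_zero_iff [Finite ι] (s : Set ι) (k : ι) :
    (∀ j ≥ k, greatestIndicator s j = 0) ↔ ∀ j ≥ k, j ∉ s := by
  refine ⟨fun h j hkj hj => ?_, fun h j hkj => greatestIndicator_eq_zero (h j hkj)⟩
  obtain ⟨g, hg, hmax⟩ := s.exists_max_image id s.toFinite ⟨j, hj⟩
  have := h g (hkj.trans (hmax j hj))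
  simp [greatestIndicator, show IsGreatest s g from ⟨hg, hmax⟩] at this

end GreatestIndicator

section Dual

variable {ι : Type*} [LinearOrder ι]

open Classical in
noncomputable def leastIndicator (s : Set ι) (j : ι) : ℕ := if IsLeast s j then 1 else 0

lemma eq_of_forall_le_eq_zero_iff [Fintype ι] {f g : ι → ℕ} (hf : ∑ j, f j ≤ 1)
    (hg : ∑ j, g j ≤ 1) (h : ∀ k, (∀ j ≤ k, f j = 0) ↔ ∀ j ≤ k, g j = 0) : f = g :=
  eq_of_forall_ge_eq_zero_iff (ι := ιᵒᵈ) hf hg h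

lemma leastIndicator_eq_zero {s : Set ι} {j : ι} (hj : j ∉ s) : leastIndicator s j = 0 :=
  greatestIndicator_eq_zero (ι := ιᵒᵈ) hj

lemma sum_leastIndicator_le_one [Fintype ι] (s : Set ι) : ∑ j, leastIndicator s j ≤ 1 :=
  sum_greatestIndicator_le_one (ι := ιᵒᵈ) s

lemma forall_le_leastIndicator_eq_zero_iff [Finite ι] (s : Set ι) (k : ι) :
    (∀ j ≤ k, leastIndicator s j = 0) ↔ ∀ j ≤ k, j ∉ s :=
  forall_ge_greatestIndicator_eq_zero_iff (ι := ιᵒᵈ) s k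

end Dual

lemma forall_ge_eq_zero_iff_of_le {ι M : Type*} [LinearOrder ι] [Zero M] {f : ι → M} {i k : ι}
    (hf : ∀ j < i, f j = 0) (hki : k ≤ i) : (∀ j ≥ k, f j = 0) ↔ ∀ j ≥ i, f j = 0 :=
  ⟨fun h j hj => h j (hki.trans hj), fun h j _ => (lt_or_ge j i).elim (hf j) (h j)⟩

lemma forall_le_eq_zero_iff_of_le {ι M : Type*} [LinearOrder ι] [Zero M] {f : ι → M} {i k : ι}
    (hf : ∀ j > i, f j = 0) (hik : i ≤ k) : (∀ j ≤ k, f j = 0) ↔ ∀ j ≤ i, f j = 0 :=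
  forall_ge_eq_zero_iff_of_le (ι := ιᵒᵈ) hf hik

section FinSplit

variable {n : ℕ}

lemma castSucc_ne_succ_of_le {i j : Fin n} (h : i ≤ j) : i.castSucc ≠ j.succ :=
  (Fin.castSucc_lt_succ_iff.2 h).ne

lemma exists_castSucc_or_succ (k : Fin n) (e : Fin (n + 1)) :
    (∃ i ≤ k, i.castSucc = e) ∨ ∃ j ≥ k, j.succ = e := by
  by_cases he : (e : ℕ) ≤ k
  · exact Or.inl ⟨⟨e, by omega⟩, Fin.le_def.2 he, Fin.ext rfl⟩
  · exact Or.inr ⟨⟨e - 1, by omega⟩, Fin.le_def.2 (by simp; omega), Fin.ext (by simp; omega)⟩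

lemma card_eq_card_castSucc_add_card_succ (T : Finset (Fin (n + 1))) (k : Fin n) :
    #T = #{i | i ≤ k ∧ i.castSucc ∈ T} + #{j | k ≤ j ∧ j.succ ∈ T} := by
  have hdisj : Disjoint (map Fin.castSuccEmb {i | i ≤ k ∧ i.castSucc ∈ T})
      (map (Fin.succEmb n) {j | k ≤ j ∧ j.succ ∈ T}) := by
    simp only [disjoint_left, mem_map, mem_filter, mem_univ, true_and, Fin.coe_castSuccEmb,
      Fin.coe_succEmb]
    rintro e ⟨i, ⟨hik, -⟩, rfl⟩ ⟨j, ⟨hkj, -⟩, hji⟩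
    exact castSucc_ne_succ_of_le (hik.trans hkj) hji.symm
  rw [← card_map Fin.castSuccEmb (s := {i | i ≤ k ∧ i.castSucc ∈ T}),
    ← card_map (Fin.succEmb n) (s := {j | k ≤ j ∧ j.succ ∈ T}), ← card_union_of_disjoint hdisj]
  congr 1
  ext e
  simp only [mem_union, mem_map, mem_filter, mem_univ, true_and, Fin.coe_castSuccEmb,
    Fin.coe_succEmb]
  refine ⟨fun he => ?_, ?_⟩
  · rcases exists_castSucc_or_succ k e with ⟨i, hik, rfl⟩ | ⟨j, hkj, rfl⟩
    exacts [Or.inl ⟨i, ⟨hik, he⟩, rfl⟩, Or.inr ⟨j, ⟨hkj, he⟩, rfl⟩]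
  · rintro (⟨i, ⟨-, hi⟩, rfl⟩ | ⟨j, ⟨-, hj⟩, rfl⟩) <;> assumption

lemma card_eq_succ_iff (T : Finset (Fin (n + 1))) (k : Fin n) :
    #T = k + 1 ↔ #{i | i ≤ k ∧ i.castSucc ∉ T} = #{j | k ≤ j ∧ j.succ ∈ T} := by
  have hlow : #{i | i ≤ k ∧ i.castSucc ∈ T} + #{i | i ≤ k ∧ i.castSucc ∉ T} = k + 1 := by
    rw [← Fin.card_Iic k, ← card_filter_add_card_filter_not (s := Iic k) (fun i => i.castSucc ∈ T),
      ← filter_ge_eq_Iic, filter_filter, filter_filter]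
  rw [card_eq_card_castSucc_add_card_succ T k]
  omega

end FinSplit

variable {n : ℕ} {S S' : Fin n → Finset (Fin (n + 1))} {r r' m m' : Fin n → Fin n → ℕ}

def IsGenocchiChain (S : Fin n → Finset (Fin (n + 1))) : Prop :=
  ∀ i : Fin n, ∀ h : (i : ℕ) + 1 < n, S i ⊆ S ⟨i + 1, h⟩ ∪ {⟨i + 1, by omega⟩}

lemma IsGenocchiChain.mem_of_le (hS : IsGenocchiChain S) {e : Fin (n + 1)} {k k' : Fin n}
    (hkk' : k ≤ k') (he : ∀ t : Fin n, k ≤ t → t < k' → (e : ℕ) ≠ t + 1) (hmem : e ∈ S k) :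
    e ∈ S k' := by
  suffices ∀ b (hkb : (k : ℕ) ≤ b) (hb : b < n),
      (∀ t : Fin n, k ≤ t → (t : ℕ) < b → (e : ℕ) ≠ t + 1) → e ∈ S ⟨b, hb⟩ from
    this k' hkk' k'.2 he
  intro b hkb
  induction b, hkb using Nat.le_induction with
  | base => exact fun _ _ => hmem
  | succ b hkb ih =>
    intro hb he
    have hprev := ih (by omega) fun t hkt htb => he t hkt (by omega)
    rcases mem_union.1 (hS ⟨b, by omega⟩ hb hprev) with h | h
    · exact h
    · exact absurd (congrArg Fin.val (mem_singleton.1 h)) (he ⟨b, by omega⟩ hkb (by simp))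

lemma IsGenocchiChain.castSucc_mem_of_le (hS : IsGenocchiChain S) {i k k' : Fin n} (hik : i ≤ k)
    (hkk' : k ≤ k') (h : i.castSucc ∈ S k) : i.castSucc ∈ S k' :=
  hS.mem_of_le hkk' (fun t hkt _ => by simp only [Fin.val_castSucc]; omega) h

lemma IsGenocchiChain.succ_mem_of_le (hS : IsGenocchiChain S) {j k k' : Fin n} (hkk' : k ≤ k')
    (hk'j : k' ≤ j) (h : j.succ ∈ S k) : j.succ ∈ S k' :=
  hS.mem_of_le hkk' (fun t _ htk' => by simp only [Fin.val_succ]; omega) h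

def RowEncodes (r : Fin n → Fin n → ℕ) (S : Fin n → Finset (Fin (n + 1))) : Prop :=
  ∀ i k, i ≤ k → (i.castSucc ∈ S k ↔ ∀ j ≥ k, r i j = 0)

def ColEncodes (m : Fin n → Fin n → ℕ) (S : Fin n → Finset (Fin (n + 1))) : Prop :=
  ∀ j k, k ≤ j → (j.succ ∉ S k ↔ ∀ i ≤ k, m i j = 0)

lemma isGenocchiChain_of_encodes (hr : RowEncodes r S) (hm : ColEncodes m S) :
    IsGenocchiChain S := by
  intro k hk e he
  have hkk' : k ≤ ⟨k + 1, hk⟩ := Fin.le_def.2 (by simp)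
  rcases exists_castSucc_or_succ k e with ⟨i, hik, rfl⟩ | ⟨j, hkj, rfl⟩
  · refine mem_union_left _ ((hr i _ (hik.trans hkk')).2 fun j hj => ?_)
    exact (hr i k hik).1 he j (hkk'.trans hj)
  · obtain rfl | hkj := hkj.eq_or_lt
    · exact mem_union_right _ (mem_singleton.2 (Fin.ext (by simp)))
    · refine mem_union_left _ (not_not.1 fun hn => ?_)
      have hk'j : (⟨k + 1, hk⟩ : Fin n) ≤ j := Fin.le_def.2 (by simp; omega)
      exact (hm j k hkj.le).2 (fun i hik => (hm j _ hk'j).1 hn i (hik.trans hkk')) he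

lemma eq_of_encodes (hr : RowEncodes r S) (hr' : RowEncodes r S') (hm : ColEncodes m S)
    (hm' : ColEncodes m S') : S = S' := by
  funext k
  ext e
  rcases exists_castSucc_or_succ k e with ⟨i, hik, rfl⟩ | ⟨j, hkj, rfl⟩
  · exact (hr i k hik).trans (hr' i k hik).symm
  · exact not_iff_not.1 ((hm j k hkj).trans (hm' j k hkj).symm)

lemma RowEncodes.unique (hr : RowEncodes r S) (hr' : RowEncodes r' S)
    (hlow : ∀ i j, j < i → r i j = 0) (hlow' : ∀ i j, j < i → r' i j = 0)
    (hrow : ∀ i, ∑ j, r i j ≤ 1) (hrow' : ∀ i, ∑ j, r' i j ≤ 1) : r = r' := by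
  funext i
  refine eq_of_forall_ge_eq_zero_iff (hrow i) (hrow' i) fun k => ?_
  rcases le_total i k with hik | hki
  · exact (hr i k hik).symm.trans (hr' i k hik)
  · rw [forall_ge_eq_zero_iff_of_le (hlow i) hki, forall_ge_eq_zero_iff_of_le (hlow' i) hki]
    exact (hr i i le_rfl).symm.trans (hr' i i le_rfl)

lemma ColEncodes.unique (hm : ColEncodes m S) (hm' : ColEncodes m' S)
    (hlow : ∀ i j, j < i → m i j = 0) (hlow' : ∀ i j, j < i → m' i j = 0)
    (hcol : ∀ j, ∑ i, m i j ≤ 1) (hcol' : ∀ j, ∑ i, m' i j ≤ 1) : m = m' := by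
  funext i j
  refine congrFun (eq_of_forall_le_eq_zero_iff (hcol j) (hcol' j) fun k => ?_) i
  rcases le_total k j with hkj | hjk
  · exact (hm j k hkj).symm.trans (hm' j k hkj)
  · rw [forall_le_eq_zero_iff_of_le (hlow · j) hjk, forall_le_eq_zero_iff_of_le (hlow' · j) hjk]
    exact (hm j j le_rfl).symm.trans (hm' j j le_rfl)

def cover (r : Fin n → Fin n → ℕ) (k : Fin n) : ℕ :=
  ∑ i, ∑ j, if i ≤ k ∧ k ≤ j then r i j else 0

lemma RowEncodes.cover_eq (hr : RowEncodes r S) (hrow : ∀ i, ∑ j, r i j ≤ 1) (k : Fin n) :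
    cover r k = #{i | i ≤ k ∧ i.castSucc ∉ S k} := by
  rw [cover, card_filter]
  refine sum_congr rfl fun i _ => ?_
  rw [sum_ite_eq_of_sum_le_one (hrow i)]
  by_cases hik : i ≤ k
  · simp only [hik, true_and, hr i k hik, ite_not]
  · simp [hik]

lemma ColEncodes.cover_eq (hm : ColEncodes m S) (hcol : ∀ j, ∑ i, m i j ≤ 1) (k : Fin n) :
    cover m k = #{j | k ≤ j ∧ j.succ ∈ S k} := by
  rw [cover, sum_comm, card_filter]
  refine sum_congr rfl fun j _ => ?_
  rw [sum_ite_eq_of_sum_le_one (hcol j)]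
  by_cases hkj : k ≤ j
  · simp only [hkj, and_true, true_and, ← hm j k hkj, ite_not]
  · simp [hkj]

lemma card_eq_succ_iff_cover_eq (hr : RowEncodes r S) (hm : ColEncodes m S)
    (hrow : ∀ i, ∑ j, r i j ≤ 1) (hcol : ∀ j, ∑ i, m i j ≤ 1) (k : Fin n) :
    #(S k) = k + 1 ↔ cover r k = cover m k := by
  rw [hr.cover_eq hrow, hm.cover_eq hcol, card_eq_succ_iff]

def decode (r m : Fin n → Fin n → ℕ) (k : Fin n) : Finset (Fin (n + 1)) :=
  map Fin.castSuccEmb {i | i ≤ k ∧ ∀ j ≥ k, r i j = 0} ∪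
    map (Fin.succEmb n) {j | k ≤ j ∧ ∃ i ≤ k, m i j ≠ 0}

lemma rowEncodes_decode : RowEncodes r (decode r m) := by
  intro i k hik
  simp only [decode, mem_union, mem_map, mem_filter, mem_univ, true_and, Fin.coe_castSuccEmb,
    Fin.coe_succEmb, Fin.castSucc_inj]
  constructor
  · rintro (⟨a, ⟨-, ha⟩, rfl⟩ | ⟨a, ⟨hka, -⟩, ha⟩)
    · exact ha
    · exact absurd ha.symm (castSucc_ne_succ_of_le (hik.trans hka))
  · exact fun h => Or.inl ⟨i, ⟨hik, h⟩, rfl⟩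

lemma colEncodes_decode : ColEncodes m (decode r m) := by
  intro j k hkj
  simp only [decode, mem_union, mem_map, mem_filter, mem_univ, true_and, Fin.coe_castSuccEmb,
    Fin.coe_succEmb, Fin.succ_inj]
  have hlow : ¬∃ a, (a ≤ k ∧ ∀ j ≥ k, r a j = 0) ∧ a.castSucc = j.succ :=
    fun ⟨a, ⟨hak, _⟩, ha⟩ => castSucc_ne_succ_of_le (hak.trans hkj) ha
  simp only [hlow, false_or, exists_eq_right, hkj, true_and, not_exists, not_and, not_not]

noncomputable def rowMat (S : Fin n → Finset (Fin (n + 1))) (i : Fin n) : Fin n → ℕ :=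
  greatestIndicator {k | i ≤ k ∧ i.castSucc ∉ S k}

noncomputable def colMat (S : Fin n → Finset (Fin (n + 1))) (i j : Fin n) : ℕ :=
  leastIndicator {k | k ≤ j ∧ j.succ ∈ S k} i

lemma rowMat_eq_zero_of_lt {i j : Fin n} (h : j < i) : rowMat S i j = 0 :=
  greatestIndicator_eq_zero fun hj => h.not_ge hj.1

lemma colMat_eq_zero_of_lt {i j : Fin n} (h : j < i) : colMat S i j = 0 :=
  leastIndicator_eq_zero fun hi => h.not_ge hi.1

lemma sum_rowMat_le_one (S : Fin n → Finset (Fin (n + 1))) (i : Fin n) : ∑ j, rowMat S i j ≤ 1 :=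
  sum_greatestIndicator_le_one _

lemma sum_colMat_le_one (S : Fin n → Finset (Fin (n + 1))) (j : Fin n) : ∑ i, colMat S i j ≤ 1 :=
  sum_leastIndicator_le_one _

lemma IsGenocchiChain.rowEncodes_rowMat (hS : IsGenocchiChain S) : RowEncodes (rowMat S) S := by
  intro i k hik
  rw [rowMat, forall_ge_greatestIndicator_eq_zero_iff]
  simp only [Set.mem_ofPred_eq, not_and, not_not]
  exact ⟨fun h j hkj _ => hS.castSucc_mem_of_le hik hkj h, fun h => h k le_rfl hik⟩

lemma IsGenocchiChain.colEncodes_colMat (hS : IsGenocchiChain S) : ColEncodes (colMat S) S := by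
  intro j k hkj
  simp only [colMat]
  rw [forall_le_leastIndicator_eq_zero_iff]
  simp only [Set.mem_ofPred_eq, not_and]
  exact ⟨fun h i hik _ hi => h (hS.succ_mem_of_le hik hkj hi), fun h hk => h k le_rfl hkj hk⟩

def IsAdmissible (p : (Fin n → Fin n → ℕ) × (Fin n → Fin n → ℕ)) : Prop :=
  (∀ i j, j < i → p.1 i j = 0) ∧ (∀ i j, j < i → p.2 i j = 0) ∧
    (∀ k, ∑ j, p.1 k j ≤ 1) ∧ (∀ k, ∑ i, p.2 i k ≤ 1) ∧ ∀ k, cover p.1 k = cover p.2 k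

noncomputable def genocchiEquiv (n : ℕ) :
    {S : Fin n → Finset (Fin (n + 1)) // (∀ i, #(S i) = i + 1) ∧ IsGenocchiChain S} ≃
      {p // IsAdmissible (n := n) p} where
  toFun S :=
    ⟨(rowMat S.1, colMat S.1), fun _ _ => rowMat_eq_zero_of_lt, fun _ _ => colMat_eq_zero_of_lt,
      sum_rowMat_le_one S.1, sum_colMat_le_one S.1, fun k =>
        (card_eq_succ_iff_cover_eq S.2.2.rowEncodes_rowMat S.2.2.colEncodes_colMat
          (sum_rowMat_le_one S.1) (sum_colMat_le_one S.1) k).1 (S.2.1 k)⟩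
  invFun p :=
    ⟨decode p.1.1 p.1.2, fun k =>
      (card_eq_succ_iff_cover_eq rowEncodes_decode colEncodes_decode p.2.2.2.1 p.2.2.2.2.1 k).2
        (p.2.2.2.2.2 k),
      isGenocchiChain_of_encodes rowEncodes_decode colEncodes_decode⟩
  left_inv S := Subtype.ext <|
    eq_of_encodes rowEncodes_decode S.2.2.rowEncodes_rowMat colEncodes_decode
      S.2.2.colEncodes_colMat
  right_inv p := by
    obtain ⟨⟨r, m⟩, hlowr, hlowm, hrow, hcol, -⟩ := p
    have hS : IsGenocchiChain (decode r m) :=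
      isGenocchiChain_of_encodes rowEncodes_decode colEncodes_decode
    refine Subtype.ext (Prod.ext ?_ ?_)
    · exact hS.rowEncodes_rowMat.unique rowEncodes_decode (fun _ _ => rowMat_eq_zero_of_lt) hlowr
        (sum_rowMat_le_one _) hrow
    · exact hS.colEncodes_colMat.unique colEncodes_decode (fun _ _ => colMat_eq_zero_of_lt) hlowm
        (sum_colMat_le_one _) hcol

end Genocchi

/-- `h_{n+1}` equals the number of pairs of collections of non-negative integers
`(r_{i,j})_{1≤i≤j≤n}`, `(m_{i,j})_{1≤i≤j≤n}` such that for all `k = 1,…,n`: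
`∑_{k'≥k} r_{k,k'} ≤ 1`, `∑_{k'≤k} m_{k',k} ≤ 1`, and
`∑_{i≤k≤j} r_{i,j} = ∑_{i≤k≤j} m_{i,j}`.
(The collections are encoded as functions `Fin n → Fin n → ℕ` vanishing off `i ≤ j`.) -/
theorem genocchi_eq_card_pairs (n : ℕ) :
    genocchi (n + 1) =
      Nat.card {p : (Fin n → Fin n → ℕ) × (Fin n → Fin n → ℕ) //
        (∀ i j : Fin n, j < i → p.1 i j = 0) ∧
        (∀ i j : Fin n, j < i → p.2 i j = 0) ∧
        (∀ k : Fin n, ∑ j : Fin n, p.1 k j ≤ 1) ∧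
        (∀ k : Fin n, ∑ i : Fin n, p.2 i k ≤ 1) ∧
        (∀ k : Fin n,
          (∑ i : Fin n, ∑ j : Fin n, if i ≤ k ∧ k ≤ j then p.1 i j else 0) =
          (∑ i : Fin n, ∑ j : Fin n, if i ≤ k ∧ k ≤ j then p.2 i j else 0))} :=
  -- `genocchi (n + 1)` counts families indexed by `Fin (n + 1 - 1)`, definitionally `Fin n`.
  Nat.card_congr (Genocchi.genocchiEquiv n)
end

section
/- Let Q be a Dynkin quiver, X and Y exceptional representations with Ext^1_Q(X,Y) = 0, M = X ⊕ Y, e = dim X, d = dim(X ⊕ Y). If N is any representation of dimension vector e that embeds into M, then Ext^1_Q(N,Y) = 0 and dim Hom_Q(N,Y) = ⟨e, d−e⟩ = dim Hom_Q(X,Y), and consequently dim S_{[N]} = dim Hom_Q(N,X) − dim End_Q(N) + dim Hom_Q(X,Y) ≤ dim Hom_Q(X,Y). -/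
/-- A quiver, given by its sets of vertices and arrows with source and target maps. -/
structure QuiverData where
  V : Type
  A : Type
  s : A → V
  t : A → V

/-- A representation of a quiver over `ℂ`. -/
structure QRep (Q : QuiverData) where
  M : Q.V → Type
  [acg : ∀ i, AddCommGroup (M i)]
  [mod : ∀ i, Module ℂ (M i)]
  f : ∀ a : Q.A, M (Q.s a) →ₗ[ℂ] M (Q.t a)

attribute [instance] QRep.acg QRep.mod

variable {Q : QuiverData}

/-- The space `Hom_Q(X,Y)` of morphisms of representations, as a submodule of the
product of the vertexwise `Hom` spaces. -/
def HomRep (X Y : QRep Q) : Submodule ℂ (∀ i, X.M i →ₗ[ℂ] Y.M i) where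
  carrier := {g | ∀ a : Q.A, (g (Q.t a)).comp (X.f a) = (Y.f a).comp (g (Q.s a))}
  add_mem' := by
    intro a b ha hb ar
    simp only [Pi.add_apply, LinearMap.add_comp, LinearMap.comp_add, ha ar, hb ar]
  zero_mem' := by intro ar; simp
  smul_mem' := by
    intro c a ha ar
    simp only [Pi.smul_apply, LinearMap.smul_comp, LinearMap.comp_smul, ha ar]

/-- Two representations are isomorphic iff there is a vertexwise bijective morphism. -/
def RepIso (X Y : QRep Q) : Prop :=
  ∃ g : HomRep X Y, ∀ i, Function.Bijective (g.1 i)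

/-- Direct sum of two representations. -/
def dsumQ (X Y : QRep Q) : QRep Q where
  M i := X.M i × Y.M i
  f a := (X.f a).prodMap (Y.f a)

/-- A representation `P` is projective if every morphism from `P` to the target of a
vertexwise surjective morphism lifts. -/
def IsProjectiveRep (P : QRep Q) : Prop :=
  ∀ (X Y : QRep Q) (p : HomRep X Y), (∀ i, Function.Surjective (p.1 i)) →
    ∀ h : HomRep P Y, ∃ h' : HomRep P X,
      ∀ i x, p.1 i (h'.1 i x) = h.1 i x

/-- A representation `I` is injective if every morphism to `I` from the source of a
vertexwise injective morphism extends. -/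
def IsInjectiveRep (I : QRep Q) : Prop :=
  ∀ (X Y : QRep Q) (ι : HomRep X Y), (∀ i, Function.Injective (ι.1 i)) →
    ∀ h : HomRep X I, ∃ h' : HomRep Y I,
      ∀ i x, h'.1 i (ι.1 i x) = h.1 i x

/-- A subrepresentation: a family of submodules stable under the structure maps. -/
structure SubRep (X : QRep Q) where
  U : ∀ i, Submodule ℂ (X.M i)
  stable : ∀ a : Q.A, ∀ x ∈ U (Q.s a), X.f a x ∈ U (Q.t a)

/-- A subrepresentation as a representation in its own right. -/
def SubRep.toRep {X : QRep Q} (S : SubRep X) : QRep Q where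
  M i := S.U i
  f a := (X.f a).restrict (S.stable a)

/-- The quotient representation `X/S`. -/
def SubRep.quot {X : QRep Q} (S : SubRep X) : QRep Q where
  M i := X.M i ⧸ S.U i
  f a := Submodule.mapQ (S.U (Q.s a)) (S.U (Q.t a)) (X.f a) (S.stable a)

/-- The map `∏_i Hom(X_i, Y_i) → ∏_a Hom(X_{s(a)}, Y_{t(a)})`,
`φ ↦ (Y_a ∘ φ_{s(a)} − φ_{t(a)} ∘ X_a)_a`, whose cokernel is `Ext¹_Q(X,Y)`
(representations of quivers being hereditary). -/
def deltaMap {Q : QuiverData} (X Y : QRep Q) :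
    (∀ i, X.M i →ₗ[ℂ] Y.M i) →ₗ[ℂ] (∀ a : Q.A, X.M (Q.s a) →ₗ[ℂ] Y.M (Q.t a)) where
  toFun φ := fun a => (Y.f a).comp (φ (Q.s a)) - (φ (Q.t a)).comp (X.f a)
  map_add' := by
    intro φ ψ
    funext a
    simp only [Pi.add_apply, LinearMap.comp_add, LinearMap.add_comp]
    abel
  map_smul' := by
    intro c φ
    funext a
    simp only [Pi.smul_apply, LinearMap.comp_smul, LinearMap.smul_comp,
      RingHom.id_apply, smul_sub]

/-- `dim Ext¹_Q(X,Y)`, computed as the dimension of the cokernel of `deltaMap`. -/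
noncomputable def extDim {Q : QuiverData} (X Y : QRep Q) : ℕ :=
  Module.finrank ℂ
    ((∀ a : Q.A, X.M (Q.s a) →ₗ[ℂ] Y.M (Q.t a)) ⧸ LinearMap.range (deltaMap X Y))

/-- The Euler form of a finite quiver. -/
def eulerQ (Q : QuiverData) [Fintype Q.V] [Fintype Q.A] (d e : Q.V → ℤ) : ℤ :=
  (∑ i : Q.V, d i * e i) - ∑ a : Q.A, d (Q.s a) * e (Q.t a)

/-!
Since `Ext¹` is the cokernel of `deltaMap`, its vanishing passes to subrepresentations in the first
argument and to quotients in the second. So `N ⊆ X ⊕ Y` gives `Ext¹(N, Y) = 0`, and the Euler form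
yields `dim Hom(N, Y) = ⟨dim X, dim Y⟩ = dim Hom(X, Y)`.

For `dim Hom(N, X) ≤ dim End(N)`, realise `X` and `N` on the same normed coordinate spaces. As
`Ext¹(X, X) = 0`, the orbit map `g ↦ g · X` is a submersion at the identity, so the orbit of `X`
contains a neighbourhood of `X`, on which `dim Hom(N, -) ≥ dim Hom(N, X)`. Now `dim Hom(N, ρ)` is
the kernel dimension of a map depending affinely on `ρ`; along the line from `N` to `X` it can
exceed its value at `N` only at finitely many points, whence `dim Hom(N, N) ≥ dim Hom(N, X)`.
-/

open Module LinearMap Filter Topology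

section Ext

@[simp]
theorem deltaMap_apply (X Y : QRep Q) (φ : ∀ i, X.M i →ₗ[ℂ] Y.M i) (a : Q.A) :
    deltaMap X Y φ a = Y.f a ∘ₗ φ (Q.s a) - φ (Q.t a) ∘ₗ X.f a :=
  rfl

theorem homRep_eq_ker_deltaMap (X Y : QRep Q) : HomRep X Y = ker (deltaMap X Y) := by
  ext g
  simp only [LinearMap.mem_ker, funext_iff, deltaMap, LinearMap.coe_mk, AddHom.coe_mk,
    Pi.zero_apply, sub_eq_zero]
  exact forall_congr' fun a => eq_comm

theorem finrank_homRep_eq_finrank_ker (X Y : QRep Q) :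
    finrank ℂ (HomRep X Y) = finrank ℂ (ker (deltaMap X Y)) := by
  rw [homRep_eq_ker_deltaMap]

theorem extDim_eq_zero_iff_surjective [Fintype Q.A] (X Y : QRep Q)
    [∀ i, FiniteDimensional ℂ (X.M i)] [∀ i, FiniteDimensional ℂ (Y.M i)] :
    extDim X Y = 0 ↔ Function.Surjective (deltaMap X Y) := by
  rw [extDim, finrank_zero_iff, Submodule.Quotient.subsingleton_iff, range_eq_top]

theorem finrank_homRep_sub_extDim [Fintype Q.V] [Fintype Q.A] (X Y : QRep Q)
    [∀ i, FiniteDimensional ℂ (X.M i)] [∀ i, FiniteDimensional ℂ (Y.M i)] :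
    (finrank ℂ (HomRep X Y) : ℤ) - extDim X Y =
      eulerQ Q (fun i => (finrank ℂ (X.M i) : ℤ)) (fun i => (finrank ℂ (Y.M i) : ℤ)) := by
  have hker := finrank_range_add_finrank_ker (deltaMap X Y)
  have hcoker := Submodule.finrank_quotient_add_finrank (range (deltaMap X Y))
  simp only [finrank_pi_fintype, finrank_linearMap] at hker hcoker
  rw [extDim, eulerQ, homRep_eq_ker_deltaMap]
  zify at hker hcoker
  linarith

theorem deltaMap_dsumQ_surjective {X Y Z : QRep Q} (hX : Function.Surjective (deltaMap X Z))
    (hY : Function.Surjective (deltaMap Y Z)) : Function.Surjective (deltaMap (dsumQ X Y) Z) := by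
  intro ξ
  obtain ⟨φX, hφX⟩ := hX fun a => ξ a ∘ₗ inl ℂ _ _
  obtain ⟨φY, hφY⟩ := hY fun a => ξ a ∘ₗ inr ℂ _ _
  refine ⟨fun i => (φX i).coprod (φY i), funext fun a => prod_ext ?_ ?_⟩
  -- see the underlying spaces of `dsumQ X Y` as products
  all_goals
    change (Z.f a ∘ₗ (φX (Q.s a)).coprod (φY (Q.s a)) -
      (φX (Q.t a)).coprod (φY (Q.t a)) ∘ₗ (X.f a).prodMap (Y.f a)) ∘ₗ _ = _
  · ext u
    have h := LinearMap.congr_fun (congrFun hφX a) u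
    simp only [deltaMap_apply, LinearMap.sub_apply, coe_comp, Function.comp_apply, coe_inl,
      coprod_apply, map_zero, add_zero, prodMap_apply] at h ⊢
    exact h
  · ext w
    have h := LinearMap.congr_fun (congrFun hφY a) w
    simp only [deltaMap_apply, LinearMap.sub_apply, coe_comp, Function.comp_apply, coe_inr,
      coprod_apply, map_zero, zero_add, prodMap_apply] at h ⊢
    exact h

theorem deltaMap_surjective_of_injective {N M Z : QRep Q} (ι : HomRep N M)
    (hι : ∀ i, Function.Injective (ι.1 i)) (hM : Function.Surjective (deltaMap M Z)) :
    Function.Surjective (deltaMap N Z) := by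
  intro ξ
  choose r hr using fun i => exists_leftInverse_of_injective (ι.1 i) (ker_eq_bot.mpr (hι i))
  obtain ⟨φ, hφ⟩ := hM fun a => ξ a ∘ₗ r (Q.s a)
  refine ⟨fun i => φ i ∘ₗ ι.1 i, funext fun a => ?_⟩
  have hφa := congrArg (· ∘ₗ ι.1 (Q.s a)) (congrFun hφ a)
  simp only [deltaMap_apply, sub_comp, comp_assoc, hr, comp_id] at hφa
  rw [deltaMap_apply, ← hφa, comp_assoc, ι.2 a]

theorem deltaMap_surjective_of_surjective {Z M M' : QRep Q} (p : HomRep M M')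
    (hp : ∀ i, Function.Surjective (p.1 i)) (hM : Function.Surjective (deltaMap Z M)) :
    Function.Surjective (deltaMap Z M') := by
  intro ξ
  choose σ hσ using fun i => exists_rightInverse_of_surjective (p.1 i) (range_eq_top.mpr (hp i))
  obtain ⟨φ, hφ⟩ := hM fun a => σ (Q.t a) ∘ₗ ξ a
  refine ⟨fun i => p.1 i ∘ₗ φ i, funext fun a => ?_⟩
  have hφa := congrArg (p.1 (Q.t a) ∘ₗ ·) (congrFun hφ a)
  simp only [deltaMap_apply, comp_sub, ← comp_assoc, hσ, id_comp] at hφa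
  rw [deltaMap_apply, ← hφa, ← comp_assoc, ← p.2 a]

theorem RepIso.symm {X Y : QRep Q} (h : RepIso X Y) : RepIso Y X := by
  obtain ⟨g, hg⟩ := h
  let e i := LinearEquiv.ofBijective (g.1 i) (hg i)
  refine ⟨⟨fun i => (e i).symm.toLinearMap, fun a => ?_⟩, fun i => (e i).symm.bijective⟩
  ext y
  obtain ⟨x, rfl⟩ := (e (Q.s a)).surjective y
  have hx := LinearMap.congr_fun (g.2 a) x
  simp only [coe_comp, Function.comp_apply] at hx
  simp [e, ← hx]

theorem extDim_eq_zero_of_repIso [Fintype Q.A] {X X' Y Y' : QRep Q}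
    [∀ i, FiniteDimensional ℂ (X.M i)] [∀ i, FiniteDimensional ℂ (X'.M i)]
    [∀ i, FiniteDimensional ℂ (Y.M i)] [∀ i, FiniteDimensional ℂ (Y'.M i)]
    (hX : RepIso X X') (hY : RepIso Y Y') (h : extDim X Y = 0) : extDim X' Y' = 0 := by
  obtain ⟨g, hg⟩ := hX.symm
  obtain ⟨p, hp⟩ := hY
  rw [extDim_eq_zero_iff_surjective] at h ⊢
  exact deltaMap_surjective_of_injective g (fun i => (hg i).1)
    (deltaMap_surjective_of_surjective p (fun i => (hp i).2) h)

end Ext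

section Hom

def HomRep.postcomp {N Z Z' : QRep Q} (g : HomRep Z Z') : HomRep N Z →ₗ[ℂ] HomRep N Z' where
  toFun φ := ⟨fun i => g.1 i ∘ₗ φ.1 i, fun a => by
    dsimp only
    rw [comp_assoc, φ.2 a, ← comp_assoc, g.2 a, comp_assoc]⟩
  map_add' φ ψ := by ext; simp
  map_smul' c φ := by ext; simp

theorem finrank_homRep_le_of_injective [Fintype Q.V] (N : QRep Q) {Z Z' : QRep Q}
    [∀ i, FiniteDimensional ℂ (N.M i)] [∀ i, FiniteDimensional ℂ (Z'.M i)] (g : HomRep Z Z')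
    (hg : ∀ i, Function.Injective (g.1 i)) :
    finrank ℂ (HomRep N Z) ≤ finrank ℂ (HomRep N Z') :=
  finrank_le_finrank_of_injective (f := HomRep.postcomp g) fun _ _ h =>
    Subtype.ext <| funext fun i => LinearMap.ext fun v =>
      hg i (LinearMap.congr_fun (congrFun (congrArg Subtype.val h) i) v)

def homRepDsumQEquiv (N X Y : QRep Q) : HomRep N (dsumQ X Y) ≃ₗ[ℂ] HomRep N X × HomRep N Y where
  toFun g := (⟨fun i => fst ℂ _ _ ∘ₗ g.1 i, fun a => by
      ext v; exact congrArg Prod.fst (LinearMap.congr_fun (g.2 a) v)⟩,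
    ⟨fun i => snd ℂ _ _ ∘ₗ g.1 i, fun a => by
      ext v; exact congrArg Prod.snd (LinearMap.congr_fun (g.2 a) v)⟩)
  invFun p := ⟨fun i => (p.1.1 i).prod (p.2.1 i), fun a => LinearMap.ext fun v =>
    Prod.ext (LinearMap.congr_fun (p.1.2 a) v) (LinearMap.congr_fun (p.2.2 a) v)⟩
  map_add' _ _ := rfl
  map_smul' _ _ := rfl
  left_inv _ := rfl
  right_inv _ := rfl

theorem finrank_homRep_dsumQ [Fintype Q.V] (N X Y : QRep Q) [∀ i, FiniteDimensional ℂ (N.M i)]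
    [∀ i, FiniteDimensional ℂ (X.M i)] [∀ i, FiniteDimensional ℂ (Y.M i)] :
    finrank ℂ (HomRep N (dsumQ X Y)) = finrank ℂ (HomRep N X) + finrank ℂ (HomRep N Y) := by
  rw [(homRepDsumQEquiv N X Y).finrank_eq, finrank_prod]

end Hom

section KernelDimension

variable {𝕜 H K : Type*} [Field 𝕜] [AddCommGroup H] [Module 𝕜 H] [FiniteDimensional 𝕜 H]
  [AddCommGroup K] [Module 𝕜 K]

theorem Module.End.finite_setOf_not_injective_one_add_smul (D : End 𝕜 H) :
    {s : 𝕜 | ¬ Function.Injective (1 + s • D : End 𝕜 H)}.Finite := by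
  refine ((End.finite_hasEigenvalue D).image fun μ => -μ⁻¹).subset ?_
  intro s hs
  obtain ⟨v, hv, hv0⟩ := (Submodule.ne_bot_iff _).mp (mt ker_eq_bot.mp hs)
  have hs0 : s ≠ 0 := by rintro rfl; simp_all
  refine ⟨-s⁻¹, End.hasEigenvalue_of_hasEigenvector ⟨?_, hv0⟩, by simp⟩
  rw [End.mem_eigenspace_iff]
  have : s • D v = -v := by simpa [add_eq_zero_iff_eq_neg'] using hv
  rw [neg_smul, ← smul_neg, ← this, smul_smul, inv_mul_cancel₀ hs0, one_smul]

/-- On a complement `S` of `ker A`, a left inverse of `A|_S` turns `(A + t • B)|_S` into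
`1 + t • D`, which is injective for all but finitely many `t`. -/
theorem finite_setOf_finrank_ker_lt_finrank_ker_add_smul (A B : H →ₗ[𝕜] K) :
    {t : 𝕜 | finrank 𝕜 (ker A) < finrank 𝕜 (ker (A + t • B))}.Finite := by
  obtain ⟨S, hS⟩ := Submodule.exists_isCompl (ker A)
  have hinj : Function.Injective (A ∘ₗ S.subtype) := by
    rw [← ker_eq_bot, ker_comp, ← Submodule.disjoint_iff_comap_eq_bot]
    exact hS.symm.disjoint
  obtain ⟨r, hr⟩ := exists_leftInverse_of_injective _ (ker_eq_bot.mpr hinj)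
  refine (End.finite_setOf_not_injective_one_add_smul (r ∘ₗ B ∘ₗ S.subtype)).subset ?_
  intro t ht hinj_t
  have hcomp : r ∘ₗ (A + t • B) ∘ₗ S.subtype = 1 + t • (r ∘ₗ B ∘ₗ S.subtype) := by
    rw [add_comp, comp_add, hr, smul_comp, comp_smul]; rfl
  have hinjS : Function.Injective ((A + t • B) ∘ₗ S.subtype) :=
    Function.Injective.of_comp (f := r) (by rw [← coe_comp, hcomp]; exact hinj_t)
  have hS_le : finrank 𝕜 S ≤ finrank 𝕜 (range (A + t • B)) := by
    rw [← finrank_range_of_inj hinjS]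
    exact Submodule.finrank_mono (range_comp_le_range _ _)
  have h₁ := finrank_range_add_finrank_ker (A + t • B)
  have h₂ := Submodule.finrank_add_eq_of_isCompl hS
  rw [Set.mem_ofPred_eq] at ht
  omega

end KernelDimension

theorem le_finrank_ker_of_eventually_le {𝕜 E H K : Type*} [NontriviallyNormedField 𝕜]
    [NormedAddCommGroup E] [NormedSpace 𝕜 E] [AddCommGroup H] [Module 𝕜 H] [FiniteDimensional 𝕜 H]
    [AddCommGroup K] [Module 𝕜 K] (F : E →ᵃ[𝕜] (H →ₗ[𝕜] K)) {x : E} {c : ℕ}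
    (hx : ∀ᶠ v in 𝓝 x, c ≤ finrank 𝕜 (ker (F v))) (y : E) :
    c ≤ finrank 𝕜 (ker (F y)) := by
  by_contra! hy
  have hline : ∀ t : 𝕜, F (AffineMap.lineMap y x t) = F y + t • (F x - F y) := fun t => by
    rw [AffineMap.apply_lineMap, AffineMap.lineMap_apply_module', add_comm]
  have hnear : {t : 𝕜 | c ≤ finrank 𝕜 (ker (F (AffineMap.lineMap y x t)))} ∈ 𝓝 (1 : 𝕜) := by
    have hcont : ContinuousAt (AffineMap.lineMap y x : 𝕜 → E) 1 :=
      (AffineMap.lineMap_continuous).continuousAt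
    exact hcont.preimage_mem_nhds (by rwa [AffineMap.lineMap_apply_one])
  refine infinite_of_mem_nhds (1 : 𝕜) hnear
    ((finite_setOf_finrank_ker_lt_finrank_ker_add_smul (F y) (F x - F y)).subset fun t ht => ?_)
  rw [Set.mem_ofPred_eq, ← hline]
  exact hy.trans_le ht

section Orbit

variable {𝕜 : Type*} [NontriviallyNormedField 𝕜]

theorem hasStrictFDerivAt_ringInverse_one_add {R : Type*} [NormedRing R] [NormedAlgebra 𝕜 R]
    [CompleteSpace R] :
    HasStrictFDerivAt (fun u : R => Ring.inverse (1 + u)) (-ContinuousLinearMap.id 𝕜 R) 0 := by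
  have hinv : HasStrictFDerivAt Ring.inverse (-ContinuousLinearMap.id 𝕜 R) (1 + 0 : R) := by
    convert hasStrictFDerivAt_ringInverse (𝕜 := 𝕜) (1 : Rˣ) using 1
    · ext u
      simp
    · simp
  exact hinv.comp (0 : R) ((hasStrictFDerivAt_id (0 : R)).const_add 1)

variable {I A : Type*} {V : I → Type*} [∀ i, NormedAddCommGroup (V i)]
  [∀ i, NormedSpace 𝕜 (V i)] {s t : A → I}

variable (s t) in
/-- The differential at the identity of the base-change action on `∏ₐ Hom(V_{s a}, V_{t a})`. -/
noncomputable def commutatorCLM (x : ∀ a, V (s a) →L[𝕜] V (t a)) :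
    (∀ i, V i →L[𝕜] V i) →L[𝕜] ∀ a, V (s a) →L[𝕜] V (t a) :=
  ContinuousLinearMap.pi fun a =>
    (ContinuousLinearMap.compL 𝕜 _ _ _ (x a)).comp (ContinuousLinearMap.proj (s a)) -
      ((ContinuousLinearMap.compL 𝕜 _ _ _).flip (x a)).comp (ContinuousLinearMap.proj (t a))

@[simp]
theorem commutatorCLM_apply (x : ∀ a, V (s a) →L[𝕜] V (t a)) (φ : ∀ i, V i →L[𝕜] V i) (a : A) :
    commutatorCLM s t x φ a = x a ∘L φ (s a) - φ (t a) ∘L x a :=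
  rfl

/-- The action of the base change `1 + g` on `x`; `Ring.inverse` is a true inverse wherever
`1 + g` is invertible, in particular near `g = 0`. -/
noncomputable def orbitMap (x : ∀ a, V (s a) →L[𝕜] V (t a)) (g : ∀ i, V i →L[𝕜] V i) :
    ∀ a, V (s a) →L[𝕜] V (t a) :=
  fun a => (1 + g (t a)) ∘L x a ∘L Ring.inverse (1 + g (s a))

theorem orbitMap_zero (x : ∀ a, V (s a) →L[𝕜] V (t a)) : orbitMap x 0 = x := by
  funext a
  simp only [orbitMap, Pi.zero_apply, add_zero, Ring.inverse_one]
  rfl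

theorem orbitMap_comp {x : ∀ a, V (s a) →L[𝕜] V (t a)} {g : ∀ i, V i →L[𝕜] V i} {a : A}
    (hg : IsUnit (1 + g (s a))) :
    orbitMap x g a ∘L (1 + g (s a)) = (1 + g (t a)) ∘L x a := by
  rw [orbitMap, ContinuousLinearMap.comp_assoc, ContinuousLinearMap.comp_assoc,
    ← ContinuousLinearMap.mul_def, Ring.inverse_mul_cancel _ hg]
  rfl

variable [Fintype I] [∀ i, CompleteSpace (V i)]

theorem hasStrictFDerivAt_orbitMap (x : ∀ a, V (s a) →L[𝕜] V (t a)) :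
    HasStrictFDerivAt (orbitMap x) (-commutatorCLM s t x) 0 := by
  refine hasStrictFDerivAt_pi'.mpr fun a => ?_
  have hs := (hasStrictFDerivAt_ringInverse_one_add (R := V (s a) →L[𝕜] V (s a))).comp
    (0 : ∀ i, V i →L[𝕜] V i) (f := fun g : ∀ i, V i →L[𝕜] V i => g (s a))
    (hasStrictFDerivAt_apply (𝕜 := 𝕜) (s a) 0)
  have ht := (hasStrictFDerivAt_apply (𝕜 := 𝕜) (t a) (0 : ∀ i, V i →L[𝕜] V i)).const_add
    (1 : V (t a) →L[𝕜] V (t a))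
  refine ((ht.clm_comp (hasStrictFDerivAt_const (x a) 0)).clm_comp hs).congr_fderiv ?_
  ext1 φ
  simp only [ContinuousLinearMap.comp_apply, _root_.add_apply, _root_.neg_apply,
    ContinuousLinearMap.compL_apply, ContinuousLinearMap.flip_apply,
    ContinuousLinearMap.proj_apply, Pi.zero_apply, add_zero, Ring.inverse_one]
  simp [ContinuousLinearMap.one_def, neg_add_eq_sub]

/-- Inverse function theorem: the orbit of `x` contains a neighbourhood of `x`. -/
theorem eventually_exists_isUnit_comp_eq_comp [Fintype A] (x : ∀ a, V (s a) →L[𝕜] V (t a))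
    (hx : Function.Surjective (commutatorCLM s t x)) :
    ∀ᶠ y in 𝓝 x, ∃ g : ∀ i, V i →L[𝕜] V i,
      (∀ i, IsUnit (g i)) ∧ ∀ a, g (t a) ∘L x a = y a ∘L g (s a) := by
  have hrange : (-commutatorCLM s t x).range = ⊤ := by
    refine range_eq_top.mpr fun ξ => ?_
    obtain ⟨φ, hφ⟩ := hx (-ξ)
    exact ⟨φ, by simp [hφ]⟩
  have hmap := (hasStrictFDerivAt_orbitMap x).map_nhds_eq_of_surj hrange
  rw [orbitMap_zero] at hmap
  have hunit : ∀ᶠ g in 𝓝 (0 : ∀ i, V i →L[𝕜] V i), ∀ i, IsUnit (1 + g i) :=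
    eventually_all.mpr fun i =>
      ((continuous_const.add (continuous_apply i) :
        Continuous fun g : ∀ i, V i →L[𝕜] V i => 1 + g i).tendsto 0).eventually_mem
        (Units.isOpen.mem_nhds (by simp))
  rw [← hmap, eventually_map]
  exact hunit.mono fun g hg => ⟨fun i => 1 + g i, hg, fun a => (orbitMap_comp (hg (s a))).symm⟩

end Orbit

section Coordinates

variable {V : Q.V → Type} [∀ i, NormedAddCommGroup (V i)] [∀ i, NormedSpace ℂ (V i)]

/-- Representations with fixed underlying spaces `V`: taking the structure maps continuous makes
them the points of a normed space. -/
abbrev QRep.ofCLM (ρ : ∀ a, V (Q.s a) →L[ℂ] V (Q.t a)) : QRep Q where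
  M := V
  f a := ρ a

noncomputable def deltaMapAffine (N : QRep Q) :
    (∀ a, V (Q.s a) →L[ℂ] V (Q.t a)) →ᵃ[ℂ]
      ((∀ i, N.M i →ₗ[ℂ] V i) →ₗ[ℂ] ∀ a, N.M (Q.s a) →ₗ[ℂ] V (Q.t a)) where
  toFun ρ := deltaMap N (QRep.ofCLM ρ)
  linear := LinearMap.mk₂ ℂ (fun ρ φ a => (ρ a : V (Q.s a) →ₗ[ℂ] V (Q.t a)) ∘ₗ φ (Q.s a))
    (fun _ _ _ => by ext; simp) (fun _ _ _ => by ext; simp)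
    (fun _ _ _ => by ext; simp) (fun _ _ _ => by ext; simp)
  map_vadd' ρ σ := by
    ext φ a v
    simp [add_sub_assoc]

@[simp]
theorem deltaMapAffine_apply (N : QRep Q) (ρ : ∀ a, V (Q.s a) →L[ℂ] V (Q.t a)) :
    deltaMapAffine N ρ = deltaMap N (QRep.ofCLM ρ) :=
  rfl

variable [∀ i, FiniteDimensional ℂ (V i)]

noncomputable def QRep.coordCLM (X : QRep Q) (e : ∀ i, X.M i ≃ₗ[ℂ] V i) :
    ∀ a, V (Q.s a) →L[ℂ] V (Q.t a) :=
  fun a => LinearMap.toContinuousLinearMap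
    ((e (Q.t a)).toLinearMap ∘ₗ X.f a ∘ₗ (e (Q.s a)).symm.toLinearMap)

theorem QRep.repIso_ofCLM_coordCLM (X : QRep Q) (e : ∀ i, X.M i ≃ₗ[ℂ] V i) :
    RepIso X (QRep.ofCLM (X.coordCLM e)) :=
  ⟨⟨fun i => (e i).toLinearMap, fun a => by ext v; simp [QRep.coordCLM]⟩, fun i => (e i).bijective⟩

theorem surjective_commutatorCLM_of_surjective_deltaMap (x : ∀ a, V (Q.s a) →L[ℂ] V (Q.t a))
    (hx : Function.Surjective (deltaMap (QRep.ofCLM x) (QRep.ofCLM x))) :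
    Function.Surjective (commutatorCLM Q.s Q.t x) := by
  intro ξ
  obtain ⟨φ, hφ⟩ := hx fun a => (ξ a : V (Q.s a) →ₗ[ℂ] V (Q.t a))
  refine ⟨fun i => LinearMap.toContinuousLinearMap (φ i), funext fun a => ?_⟩
  ext v
  simpa using LinearMap.congr_fun (congrFun hφ a) v

theorem eventually_exists_injective_homRep_ofCLM [Fintype Q.V] [Fintype Q.A]
    (x : ∀ a, V (Q.s a) →L[ℂ] V (Q.t a))
    (hx : Function.Surjective (deltaMap (QRep.ofCLM x) (QRep.ofCLM x))) :
    ∀ᶠ y in 𝓝 x, ∃ g : HomRep (QRep.ofCLM x) (QRep.ofCLM y), ∀ i, Function.Injective (g.1 i) := by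
  have := fun i => FiniteDimensional.complete ℂ (V i)
  filter_upwards [eventually_exists_isUnit_comp_eq_comp x
    (surjective_commutatorCLM_of_surjective_deltaMap x hx)] with y ⟨g, hunit, hg⟩
  refine ⟨⟨fun i => g i, fun a => congrArg ContinuousLinearMap.toLinearMap (hg a)⟩, fun i => ?_⟩
  exact ((Module.End.isUnit_iff _).mp ((hunit i).map ContinuousLinearMap.toLinearMapRingHom)).1

/-- The orbit of `x` is open, and `dim Hom(N, -)` can only jump up under specialisation. -/
theorem finrank_homRep_ofCLM_le [Fintype Q.V] [Fintype Q.A] (N : QRep Q)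
    [∀ i, FiniteDimensional ℂ (N.M i)] (x : ∀ a, V (Q.s a) →L[ℂ] V (Q.t a))
    (hx : extDim (QRep.ofCLM x) (QRep.ofCLM x) = 0) (y : ∀ a, V (Q.s a) →L[ℂ] V (Q.t a)) :
    finrank ℂ (HomRep N (QRep.ofCLM x)) ≤ finrank ℂ (HomRep N (QRep.ofCLM y)) := by
  have h := le_finrank_ker_of_eventually_le (deltaMapAffine N) (x := x)
    (c := finrank ℂ (HomRep N (QRep.ofCLM x))) ?_ y
  · exact h.trans_eq (finrank_homRep_eq_finrank_ker N (QRep.ofCLM y)).symm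
  filter_upwards [eventually_exists_injective_homRep_ofCLM x
    ((extDim_eq_zero_iff_surjective _ _).mp hx)] with z ⟨g, hg⟩
  exact (finrank_homRep_le_of_injective N (Z := QRep.ofCLM x) (Z' := QRep.ofCLM z) g hg).trans_eq
    (finrank_homRep_eq_finrank_ker N (QRep.ofCLM z))

end Coordinates

theorem finrank_homRep_le_finrank_end [Fintype Q.V] [Fintype Q.A] {X N : QRep Q}
    [∀ i, FiniteDimensional ℂ (X.M i)] [∀ i, FiniteDimensional ℂ (N.M i)] (hX : extDim X X = 0)
    (hdim : ∀ i, finrank ℂ (N.M i) = finrank ℂ (X.M i)) :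
    finrank ℂ (HomRep N X) ≤ finrank ℂ (HomRep N N) := by
  let V i := Fin (finrank ℂ (X.M i)) → ℂ
  let eX i : X.M i ≃ₗ[ℂ] V i := LinearEquiv.ofFinrankEq _ _ (by simp [V])
  let eN i : N.M i ≃ₗ[ℂ] V i := LinearEquiv.ofFinrankEq _ _ (by simp [V, hdim])
  have isoX := X.repIso_ofCLM_coordCLM eX
  have hX' := extDim_eq_zero_of_repIso isoX isoX hX
  obtain ⟨gX, hgX⟩ := isoX
  obtain ⟨gN, hgN⟩ := (N.repIso_ofCLM_coordCLM eN).symm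
  calc finrank ℂ (HomRep N X)
      ≤ finrank ℂ (HomRep N (QRep.ofCLM (X.coordCLM eX))) :=
        finrank_homRep_le_of_injective N gX fun i => (hgX i).1
    _ ≤ finrank ℂ (HomRep N (QRep.ofCLM (N.coordCLM eN))) :=
        finrank_homRep_ofCLM_le N _ hX' _
    _ ≤ finrank ℂ (HomRep N N) := finrank_homRep_le_of_injective N gN fun i => (hgN i).1

theorem stratum_dimension_estimate_general (Q : QuiverData) [Fintype Q.V] [Fintype Q.A]
    (X Y N : QRep Q)
    [∀ i, FiniteDimensional ℂ (X.M i)] [∀ i, FiniteDimensional ℂ (Y.M i)]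
    [∀ i, FiniteDimensional ℂ (N.M i)]
    (hX : extDim X X = 0) (hY : extDim Y Y = 0) (hXY : extDim X Y = 0)
    (hdim : ∀ i, Module.finrank ℂ (N.M i) = Module.finrank ℂ (X.M i))
    (hemb : ∃ ι : HomRep N (dsumQ X Y), ∀ i, Function.Injective (ι.1 i)) :
    extDim N Y = 0 ∧
    (Module.finrank ℂ (HomRep N Y) : ℤ) =
      eulerQ Q (fun i => (Module.finrank ℂ (X.M i) : ℤ))
        (fun i => (Module.finrank ℂ (Y.M i) : ℤ)) ∧
    Module.finrank ℂ (HomRep N Y) = Module.finrank ℂ (HomRep X Y) ∧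
    (Module.finrank ℂ (HomRep N (dsumQ X Y)) : ℤ) - Module.finrank ℂ (HomRep N N) =
      (Module.finrank ℂ (HomRep N X) : ℤ) - Module.finrank ℂ (HomRep N N) +
        Module.finrank ℂ (HomRep X Y) ∧
    (Module.finrank ℂ (HomRep N X) : ℤ) - Module.finrank ℂ (HomRep N N) +
        Module.finrank ℂ (HomRep X Y) ≤ Module.finrank ℂ (HomRep X Y) := by
  obtain ⟨ι, hι⟩ := hemb
  have hNY : extDim N Y = 0 := by
    rw [extDim_eq_zero_iff_surjective] at hXY hY ⊢
    exact deltaMap_surjective_of_injective ι hι (deltaMap_dsumQ_surjective hXY hY)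
  have hEulerNY := finrank_homRep_sub_extDim N Y
  have hEulerXY := finrank_homRep_sub_extDim X Y
  simp only [hNY, hXY, hdim, CharP.cast_eq_zero, sub_zero] at hEulerNY hEulerXY
  have hNYXY : finrank ℂ (HomRep N Y) = finrank ℂ (HomRep X Y) := by
    exact_mod_cast hEulerNY.trans hEulerXY.symm
  have hle := finrank_homRep_le_finrank_end hX hdim
  refine ⟨hNY, hEulerNY, hNYXY, ?_, by omega⟩
  rw [finrank_homRep_dsumQ, hNYXY]
  push_cast
  ring

/-- Let `Q` be a Dynkin quiver (encoded by positive definiteness of the Euler form),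
`X` and `Y` exceptional representations with `Ext¹(X,Y) = 0`, `M = X ⊕ Y`,
`e = dim X`, `d = dim (X ⊕ Y)`.  If `N` is any representation of dimension vector `e`
that embeds into `M`, then `Ext¹(N,Y) = 0`,
`dim Hom(N,Y) = ⟨e, d−e⟩ = dim Hom(X,Y)`, and consequently
`dim S_{[N]} = dim Hom(N, M) − dim End(N)
             = dim Hom(N,X) − dim End(N) + dim Hom(X,Y) ≤ dim Hom(X,Y)`. -/
theorem stratum_dimension_estimate (Q : QuiverData) [Fintype Q.V] [Fintype Q.A]
    (dynkin : ∀ d : Q.V → ℤ, d ≠ 0 → 0 < eulerQ Q d d)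
    (X Y N : QRep Q)
    [∀ i, FiniteDimensional ℂ (X.M i)] [∀ i, FiniteDimensional ℂ (Y.M i)]
    [∀ i, FiniteDimensional ℂ (N.M i)]
    (hX : extDim X X = 0) (hY : extDim Y Y = 0) (hXY : extDim X Y = 0)
    (hdim : ∀ i, Module.finrank ℂ (N.M i) = Module.finrank ℂ (X.M i))
    (hemb : ∃ ι : HomRep N (dsumQ X Y), ∀ i, Function.Injective (ι.1 i)) :
    extDim N Y = 0 ∧
    (Module.finrank ℂ (HomRep N Y) : ℤ) =
      eulerQ Q (fun i => (Module.finrank ℂ (X.M i) : ℤ))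
        (fun i => (Module.finrank ℂ (Y.M i) : ℤ)) ∧
    Module.finrank ℂ (HomRep N Y) = Module.finrank ℂ (HomRep X Y) ∧
    (Module.finrank ℂ (HomRep N (dsumQ X Y)) : ℤ) - Module.finrank ℂ (HomRep N N) =
      (Module.finrank ℂ (HomRep N X) : ℤ) - Module.finrank ℂ (HomRep N N) +
        Module.finrank ℂ (HomRep X Y) ∧
    (Module.finrank ℂ (HomRep N X) : ℤ) - Module.finrank ℂ (HomRep N N) +
        Module.finrank ℂ (HomRep X Y) ≤ Module.finrank ℂ (HomRep X Y) :=
  stratum_dimension_estimate_general Q X Y N hX hY hXY hdim hemb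
end
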